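/- arXiv:2206.04638 — 3 statements merged into one kernel-verified Lean document; each statement's English description precedes it below -/
import Mathlib

section
/- (Gärtner–Ellis theorem on ℝ^m) Let (μ_n) be a sequence of Borel probability measures on ℝ^m and r_n → ∞. Suppose that for every θ ∈ ℝ^m the limit p(θ) := lim_{n→∞} (1/r_n) log ∫_{ℝ^m} e^{r_n⟨θ,x⟩} dμ_n(x) exists, is finite, and the resulting function p : ℝ^m → ℝ is differentiable. Then LDP(μ_n, r_n) holds with rate function p*, where p*(x) := sup_{θ∈ℝ^m} [⟨x,θ⟩ − p(θ)] is the Legendre transform of p. -/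
/-!
Upper bound: by Chernoff's inequality `κ {c ≤ ⟪θ, z⟫} ≤ e^{-t c} ∫ e^{t ⟪θ, z⟫} dκ`, the half-space
`{c ≤ ⟪θ, ·⟫}` has `μ n`-mass at most `e^{-r n (c - p θ - o(1))}`. The compact part of a closed set
on which `p*` exceeds `a` is covered by finitely many half-spaces with `c - p θ > a`, and the
complement of a large ball by finitely many half-spaces of arbitrarily large level (exponential
tightness).

Lower bound at `x` with `p* x < a`: a maximiser `η` of `⟪x, θ⟫ - p θ - ε ‖θ‖² / 2` has
`Dp(η) = ⟪y, ·⟫` with `y = x - ε η` close to `x`, and `⟪η, y⟫ - p η ≤ p* x`. Tilting `μ n` by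
`e^{r n ⟪η, z⟫}` yields measures whose limiting log-moment generating function is
`p (· + η) - p η`; since `p` is differentiable at `η`, its Legendre transform vanishes only at `y`,
so by the upper bound the tilted measures concentrate near `y`. Undoing the tilt on a small ball
around `y` costs a factor `e^{-r n (⟪η, y⟫ - p η + o(1))}`.
-/

open MeasureTheory Filter Topology RealInnerProductSpace
open scoped ENNReal NNReal

noncomputable section

def IsLDP {𝒳 : Type*} [TopologicalSpace 𝒳] [MeasurableSpace 𝒳]
    (μ : ℕ → Measure 𝒳) (r : ℕ → ℝ) (I : 𝒳 → ℝ≥0∞) : Prop :=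
  LowerSemicontinuous I ∧
  (∀ O : Set 𝒳, IsOpen O →
    -(⨅ x ∈ O, (I x : EReal)) ≤
      Filter.liminf (fun n => ((r n)⁻¹ : ℝ) * ENNReal.log (μ n O)) Filter.atTop) ∧
  (∀ C : Set 𝒳, IsClosed C →
    Filter.limsup (fun n => ((r n)⁻¹ : ℝ) * ENNReal.log (μ n C)) Filter.atTop ≤
      -(⨅ x ∈ C, (I x : EReal)))

theorem IsCompact.exists_finset_forall_exists_lt {X ι : Type*} [TopologicalSpace X] {K : Set X}
    (hK : IsCompact K) {f : ι → X → ℝ} (hf : ∀ i, LowerSemicontinuous (f i)) {a : ℝ}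
    (h : ∀ x ∈ K, ∃ i, a < f i x) :
    ∃ T : Finset ι, ∃ b, a < b ∧ ∀ x ∈ K, ∃ i ∈ T, b < f i x := by
  classical
  obtain ⟨t, ht⟩ := hK.elim_finite_subcover
    (fun ic : ι × Set.Ioi a => f ic.1 ⁻¹' Set.Ioi (ic.2 : ℝ))
    (fun ic => (hf ic.1).isOpen_preimage ic.2) fun x hx => by
      obtain ⟨i, hi⟩ := h x hx
      refine Set.mem_iUnion.2 ⟨(i, ⟨(a + f i x) / 2, ?_⟩), ?_⟩
      · simp only [Set.mem_Ioi]; linarith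
      · simp only [Set.mem_preimage, Set.mem_Ioi]; linarith
  set levels := insert (a + 1) (t.image fun ic => (ic.2 : ℝ))
  refine ⟨t.image Prod.fst, levels.min' (Finset.insert_nonempty _ _), ?_, fun x hx => ?_⟩
  · simp only [levels, Finset.lt_min'_iff, Finset.mem_insert, Finset.mem_image]
    rintro _ (rfl | ⟨ic, -, rfl⟩)
    · exact lt_add_one a
    · exact ic.2.2
  · obtain ⟨ic, hic, hx⟩ := Set.mem_iUnion₂.1 (ht hx)
    exact ⟨ic.1, Finset.mem_image_of_mem _ hic, (levels.min'_le _
      (Finset.mem_insert_of_mem (Finset.mem_image_of_mem _ hic))).trans_lt hx⟩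

theorem HasFDerivAt.eq_innerSL_of_isLocalMax {E : Type*} [NormedAddCommGroup E]
    [InnerProductSpace ℝ E] {f : E → ℝ} {f' : E →L[ℝ] ℝ} {y η : E} (hf : HasFDerivAt f f' η)
    (hmax : IsLocalMax (fun θ => ⟪y, θ⟫ - f θ) η) : f' = innerSL ℝ y :=
  (sub_eq_zero.1 (hmax.hasFDerivAt_eq_zero ((innerSL ℝ y).hasFDerivAt.sub hf))).symm

namespace GartnerEllis

lemma inv_mul_log_le_iff {r : ℝ} (hr : 0 < r) {f : ℝ≥0∞} {c : ℝ} :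
    ((r⁻¹ : ℝ) : EReal) * ENNReal.log f ≤ c ↔ f ≤ ENNReal.ofReal (Real.exp (r * c)) := by
  rw [EReal.coe_inv, ← EReal.div_eq_inv_mul,
    EReal.div_le_iff_le_mul (by exact_mod_cast hr) (EReal.coe_ne_top r), ← EReal.coe_mul,
    ← EReal.exp_coe, ← ENNReal.log_le_log_iff, EReal.log_exp]

lemma le_inv_mul_log_iff {r : ℝ} (hr : 0 < r) {f : ℝ≥0∞} {c : ℝ} :
    c ≤ ((r⁻¹ : ℝ) : EReal) * ENNReal.log f ↔ ENNReal.ofReal (Real.exp (r * c)) ≤ f := by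
  rw [EReal.coe_inv, ← EReal.div_eq_inv_mul,
    EReal.le_div_iff_mul_le (by exact_mod_cast hr) (EReal.coe_ne_top r), mul_comm,
    ← EReal.coe_mul, ← EReal.exp_coe, ← ENNReal.log_le_log_iff, EReal.log_exp]

lemma exists_lt_of_coe_lt_iSup_ofReal {ι : Type*} {f : ι → ℝ} (hf : ∃ i, 0 ≤ f i) {a : ℝ}
    (ha : (a : EReal) < ((⨆ i, ENNReal.ofReal (f i) : ℝ≥0∞) : EReal)) : ∃ i, a < f i := by
  rcases lt_or_ge a 0 with ha0 | ha0
  · obtain ⟨i, hi⟩ := hf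
    exact ⟨i, ha0.trans_le hi⟩
  · rw [← max_eq_left ha0, ← EReal.coe_ennreal_ofReal,
      EReal.coe_ennreal_lt_coe_ennreal_iff, lt_iSup_iff] at ha
    obtain ⟨i, hi⟩ := ha
    exact ⟨i, (ENNReal.ofReal_lt_ofReal_iff'.1 hi).1⟩

lemma exists_lt_forall_le_of_iSup_ofReal_lt {ι : Type*} {f : ι → ℝ} {a : ℝ}
    (ha : ((⨆ i, ENNReal.ofReal (f i) : ℝ≥0∞) : EReal) < a) : ∃ b < a, ∀ i, f i ≤ b := by
  set I := ⨆ i, ENNReal.ofReal (f i)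
  have hI : I ≠ ⊤ := by
    rintro hI
    rw [hI, EReal.coe_ennreal_top] at ha
    exact not_top_lt ha
  refine ⟨I.toReal, ?_, fun i => ?_⟩
  · rwa [← EReal.coe_ennreal_toReal hI, EReal.coe_lt_coe_iff] at ha
  · calc f i ≤ (ENNReal.ofReal (f i)).toReal := by
          rw [ENNReal.toReal_ofReal']; exact le_max_left _ _
      _ ≤ I.toReal := ENNReal.toReal_mono hI (le_iSup (fun i => ENNReal.ofReal (f i)) i)

section ExpSmall

variable {X : Type*} [MeasurableSpace X] {κ : ℕ → Measure X} {r : ℕ → ℝ}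

def IsExpSmall (κ : ℕ → Measure X) (r : ℕ → ℝ) (a : ℝ) (B : Set X) : Prop :=
  ∀ᶠ n in atTop, κ n B ≤ ENNReal.ofReal (Real.exp (-(r n * a)))

lemma IsExpSmall.mono_set {a : ℝ} {A B : Set X} (h : IsExpSmall κ r a B) (hAB : A ⊆ B) :
    IsExpSmall κ r a A :=
  h.mono fun _ hn => (measure_mono hAB).trans hn

lemma IsExpSmall.mono_rate (hr : Tendsto r atTop atTop) {a b : ℝ} {B : Set X}
    (h : IsExpSmall κ r b B) (hab : a ≤ b) : IsExpSmall κ r a B := by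
  filter_upwards [h, hr.eventually_ge_atTop 0] with n hn hrn
  exact hn.trans (ENNReal.ofReal_le_ofReal (Real.exp_le_exp.2 (by nlinarith)))

lemma eventually_natCast_mul_exp_le (hr : Tendsto r atTop atTop) (k : ℕ) {a b : ℝ} (hab : a < b) :
    ∀ᶠ n in atTop, (k : ℝ≥0∞) * ENNReal.ofReal (Real.exp (-(r n * b)))
      ≤ ENNReal.ofReal (Real.exp (-(r n * a))) := by
  filter_upwards [(Real.tendsto_exp_atTop.comp (hr.atTop_mul_const (sub_pos.2 hab))
    ).eventually_ge_atTop (k : ℝ)] with n hn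
  rw [← ENNReal.ofReal_natCast, ← ENNReal.ofReal_mul (Nat.cast_nonneg k)]
  refine ENNReal.ofReal_le_ofReal ?_
  calc (k : ℝ) * Real.exp (-(r n * b))
      ≤ Real.exp (r n * (b - a)) * Real.exp (-(r n * b)) :=
        mul_le_mul_of_nonneg_right hn (Real.exp_nonneg _)
    _ = Real.exp (-(r n * a)) := by rw [← Real.exp_add]; ring_nf

lemma IsExpSmall.biUnion (hr : Tendsto r atTop atTop) {ι : Type*} {T : Finset ι} {B : ι → Set X}
    {a b : ℝ} (h : ∀ i ∈ T, IsExpSmall κ r b (B i)) (hab : a < b) :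
    IsExpSmall κ r a (⋃ i ∈ T, B i) := by
  filter_upwards [(eventually_all_finset T).2 h, eventually_natCast_mul_exp_le hr T.card hab]
    with n hn hcard
  calc κ n (⋃ i ∈ T, B i) ≤ ∑ i ∈ T, κ n (B i) := measure_biUnion_finset_le T B
    _ ≤ ∑ _i ∈ T, ENNReal.ofReal (Real.exp (-(r n * b))) := Finset.sum_le_sum hn
    _ = T.card * ENNReal.ofReal (Real.exp (-(r n * b))) := by
        rw [Finset.sum_const, nsmul_eq_mul]
    _ ≤ ENNReal.ofReal (Real.exp (-(r n * a))) := hcard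

lemma IsExpSmall.union (hr : Tendsto r atTop atTop) {A B : Set X} {a b : ℝ}
    (hA : IsExpSmall κ r b A) (hB : IsExpSmall κ r b B) (hab : a < b) :
    IsExpSmall κ r a (A ∪ B) := by
  filter_upwards [hA, hB, eventually_natCast_mul_exp_le hr 2 hab] with n hAn hBn h2
  calc κ n (A ∪ B) ≤ κ n A + κ n B := measure_union_le A B
    _ ≤ 2 * ENNReal.ofReal (Real.exp (-(r n * b))) := by rw [two_mul]; exact add_le_add hAn hBn
    _ ≤ ENNReal.ofReal (Real.exp (-(r n * a))) := mod_cast h2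

lemma limsup_inv_mul_log_le (hr : Tendsto r atTop atTop) {f : ℕ → ℝ≥0∞} {a : ℝ}
    (h : ∀ᶠ n in atTop, f n ≤ ENNReal.ofReal (Real.exp (-(r n * a)))) :
    limsup (fun n => (((r n)⁻¹ : ℝ) : EReal) * ENNReal.log (f n)) atTop ≤ ((-a : ℝ) : EReal) := by
  refine limsup_le_of_le (by isBoundedDefault) ?_
  filter_upwards [h, hr.eventually_gt_atTop 0] with n hn hrn
  rwa [inv_mul_log_le_iff hrn, mul_neg]

lemma le_liminf_inv_mul_log (hr : Tendsto r atTop atTop) {f : ℕ → ℝ≥0∞} {a : ℝ}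
    (h : ∀ᶠ n in atTop, ENNReal.ofReal (Real.exp (-(r n * a))) ≤ f n) :
    ((-a : ℝ) : EReal) ≤ liminf (fun n => (((r n)⁻¹ : ℝ) : EReal) * ENNReal.log (f n)) atTop := by
  refine le_liminf_of_le (by isBoundedDefault) ?_
  filter_upwards [h, hr.eventually_gt_atTop 0] with n hn hrn
  rwa [le_inv_mul_log_iff hrn, mul_neg]

end ExpSmall

section Calculus

variable {E : Type*} [NormedAddCommGroup E] [InnerProductSpace ℝ E] {p : E → ℝ}

lemma eq_of_hasFDerivAt_innerSL_of_isMaxOn {y z η : E} (hp : HasFDerivAt p (innerSL ℝ y) η)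
    (hmax : IsMaxOn (fun θ => ⟪z, θ⟫ - p θ) Set.univ η) : z = y := by
  have h := hp.eq_innerSL_of_isLocalMax (hmax.isLocalMax Filter.univ_mem)
  rw [← sub_eq_zero, ← norm_eq_zero, ← innerSL_apply_norm ℝ, map_sub, h, sub_self, norm_zero]

lemma exists_hasFDerivAt_innerSL_sub_smul [ProperSpace E] (hp : Differentiable ℝ p) {x : E}
    {b ε : ℝ} (hε : 0 < ε) (hb : ∀ θ, ⟪x, θ⟫ - p θ ≤ b) :
    ∃ η, HasFDerivAt p (innerSL ℝ (x - ε • η)) η ∧ ε * ‖η‖ ^ 2 ≤ 2 * (b + p 0) := by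
  set g : E → ℝ := fun θ => ⟪x, θ⟫ - (p θ + ε / 2 * ‖θ‖ ^ 2)
  have hcoercive : ∀ᶠ θ in cocompact E, g θ ≤ g 0 := by
    filter_upwards [(((tendsto_pow_atTop two_ne_zero).comp tendsto_norm_cocompact_atTop
      ).const_mul_atTop (half_pos hε)).eventually_ge_atTop (b + p 0)] with θ hθ
    have := hb θ
    simp only [Function.comp_apply] at hθ
    simp only [g, inner_zero_right, norm_zero]
    linarith
  have hpc := hp.continuous
  obtain ⟨η, hη⟩ := (by fun_prop : Continuous g).exists_forall_ge' 0 hcoercive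
  have hderiv := (hp η).hasFDerivAt.add
    ((hasStrictFDerivAt_norm_sq η).hasFDerivAt.const_mul (ε / 2))
  have hgrad := hderiv.eq_innerSL_of_isLocalMax (IsMaxOn.isLocalMax (fun θ _ => hη θ) univ_mem)
  refine ⟨η, ?_, ?_⟩
  · convert (hp η).hasFDerivAt using 1
    rw [map_sub, map_smul, ← hgrad]
    module
  · have h0 := hη 0
    have hbη := hb η
    simp only [g, inner_zero_right, norm_zero] at h0
    nlinarith

end Calculus

section Moments

variable {E : Type*} [NormedAddCommGroup E] [InnerProductSpace ℝ E] [MeasurableSpace E]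
  {κ : ℕ → Measure E} {r : ℕ → ℝ} {p : E → ℝ}

def expMoment (ν : Measure E) (t : ℝ) (θ : E) : ℝ≥0∞ :=
  ∫⁻ z, ENNReal.ofReal (Real.exp (t * ⟪θ, z⟫)) ∂ν

def ExpMomentUpperBound (κ : ℕ → Measure E) (r : ℕ → ℝ) (q : E → ℝ) : Prop :=
  ∀ θ, ∀ ε > 0, ∀ᶠ n in atTop,
    expMoment (κ n) (r n) θ ≤ ENNReal.ofReal (Real.exp (r n * (q θ + ε)))

def ExpMomentLowerBound (κ : ℕ → Measure E) (r : ℕ → ℝ) (q : E → ℝ) : Prop :=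
  ∀ θ, ∀ ε > 0, ∀ᶠ n in atTop,
    ENNReal.ofReal (Real.exp (r n * (q θ - ε))) ≤ expMoment (κ n) (r n) θ

lemma expMoment_zero (ν : Measure E) (t : ℝ) : expMoment ν t 0 = ν Set.univ := by
  simp [expMoment]

lemma expMomentUpperBound_of_tendsto (hr : Tendsto r atTop atTop)
    (hp : ∀ θ, Tendsto (fun n => (((r n)⁻¹ : ℝ) : EReal) * ENNReal.log (expMoment (κ n) (r n) θ))
      atTop (𝓝 (p θ : EReal))) :
    ExpMomentUpperBound κ r p := by
  intro θ ε hε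
  have hlt : (p θ : EReal) < ((p θ + ε : ℝ) : EReal) := by exact_mod_cast lt_add_of_pos_right _ hε
  filter_upwards [(hp θ).eventually_lt_const hlt, hr.eventually_gt_atTop 0] with n hn hrn
  exact (inv_mul_log_le_iff hrn).1 hn.le

lemma expMomentLowerBound_of_tendsto (hr : Tendsto r atTop atTop)
    (hp : ∀ θ, Tendsto (fun n => (((r n)⁻¹ : ℝ) : EReal) * ENNReal.log (expMoment (κ n) (r n) θ))
      atTop (𝓝 (p θ : EReal))) :
    ExpMomentLowerBound κ r p := by
  intro θ ε hε
  have hlt : ((p θ - ε : ℝ) : EReal) < (p θ : EReal) := by exact_mod_cast sub_lt_self _ hε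
  filter_upwards [(hp θ).eventually_const_lt hlt, hr.eventually_gt_atTop 0] with n hn hrn
  exact (le_inv_mul_log_iff hrn).1 hn.le

lemma eventually_expMoment_ne_zero_and_ne_top (hUB : ExpMomentUpperBound κ r p)
    (hLB : ExpMomentLowerBound κ r p) (θ : E) :
    ∀ᶠ n in atTop, expMoment (κ n) (r n) θ ≠ 0 ∧ expMoment (κ n) (r n) θ ≠ ⊤ := by
  filter_upwards [hUB θ 1 one_pos, hLB θ 1 one_pos] with n hle hge
  exact ⟨(lt_of_lt_of_le (ENNReal.ofReal_pos.2 (Real.exp_pos _)) hge).ne',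
    ne_top_of_le_ne_top ENNReal.ofReal_ne_top hle⟩

lemma setLIntegral_exp_inner_le (ν : Measure E) {t : ℝ} (ht : 0 ≤ t) (η : E) {B : Set E} {s : ℝ}
    (hB : ∀ z ∈ B, ⟪η, z⟫ ≤ s) :
    ∫⁻ z in B, ENNReal.ofReal (Real.exp (t * ⟪η, z⟫)) ∂ν
      ≤ ENNReal.ofReal (Real.exp (t * s)) * ν B := by
  rw [← setLIntegral_const]
  exact setLIntegral_mono measurable_const fun z hz =>
    ENNReal.ofReal_le_ofReal (Real.exp_le_exp.2 (mul_le_mul_of_nonneg_left (hB z hz) ht))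

variable [OpensMeasurableSpace E]

lemma measurable_ofReal_exp_inner (t : ℝ) (θ : E) :
    Measurable fun z : E => ENNReal.ofReal (Real.exp (t * ⟪θ, z⟫)) :=
  (ENNReal.continuous_ofReal.comp (by fun_prop)).measurable

lemma measure_halfSpace_mul_exp_le (ν : Measure E) {t : ℝ} (ht : 0 ≤ t) (θ : E) (c : ℝ) :
    ν {z | c ≤ ⟪θ, z⟫} * ENNReal.ofReal (Real.exp (t * c)) ≤ expMoment ν t θ := by
  rw [mul_comm]
  calc ENNReal.ofReal (Real.exp (t * c)) * ν {z | c ≤ ⟪θ, z⟫}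
      ≤ ENNReal.ofReal (Real.exp (t * c)) *
          ν {z | ENNReal.ofReal (Real.exp (t * c)) ≤ ENNReal.ofReal (Real.exp (t * ⟪θ, z⟫))} := by
        refine mul_le_mul_right (measure_mono fun z hz => ?_) _
        exact ENNReal.ofReal_le_ofReal (Real.exp_le_exp.2 (mul_le_mul_of_nonneg_left hz ht))
    _ ≤ expMoment ν t θ :=
        mul_meas_ge_le_lintegral₀ (measurable_ofReal_exp_inner t θ).aemeasurable _

lemma ExpMomentUpperBound.isExpSmall_halfSpace {q : E → ℝ} (hUB : ExpMomentUpperBound κ r q)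
    (hr : Tendsto r atTop atTop) (θ : E) {a c : ℝ} (ha : a < c - q θ) :
    IsExpSmall κ r a {z | c ≤ ⟪θ, z⟫} := by
  filter_upwards [hUB θ (c - q θ - a) (sub_pos.2 ha), hr.eventually_ge_atTop 0] with n hZ hrn
  refine (ENNReal.mul_le_mul_iff_left (ENNReal.ofReal_pos.2 (Real.exp_pos (r n * c))).ne'
    ENNReal.ofReal_ne_top).1 ?_
  calc κ n {z | c ≤ ⟪θ, z⟫} * ENNReal.ofReal (Real.exp (r n * c))
      ≤ ENNReal.ofReal (Real.exp (r n * (q θ + (c - q θ - a)))) :=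
        (measure_halfSpace_mul_exp_le (κ n) hrn θ c).trans hZ
    _ = ENNReal.ofReal (Real.exp (-(r n * a))) * ENNReal.ofReal (Real.exp (r n * c)) := by
        rw [← ENNReal.ofReal_mul (Real.exp_nonneg _), ← Real.exp_add]
        ring_nf

lemma ExpMomentUpperBound.exists_isExpSmall_of_isCompact {q : E → ℝ}
    (hUB : ExpMomentUpperBound κ r q) (hr : Tendsto r atTop atTop) {K : Set E} (hK : IsCompact K)
    {a : ℝ} (h : ∀ z ∈ K, ∃ θ, a < ⟪z, θ⟫ - q θ) : ∃ b > a, IsExpSmall κ r b K := by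
  obtain ⟨T, b, hab, hT⟩ := hK.exists_finset_forall_exists_lt
    (f := fun θ z => ⟪z, θ⟫ - q θ) (fun θ => (by fun_prop : Continuous _).lowerSemicontinuous) h
  refine ⟨(a + b) / 2, by linarith, (IsExpSmall.biUnion hr (T := T) (b := (a + 3 * b) / 4)
    (fun θ _ => hUB.isExpSmall_halfSpace hr θ (c := b + q θ) (by linarith))
    (by linarith)).mono_set fun z hz => ?_⟩
  obtain ⟨θ, hθT, hθ⟩ := hT z hz
  refine Set.mem_biUnion hθT ?_
  simp only [Set.mem_ofPred_eq, real_inner_comm z] at hθ ⊢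
  linarith

lemma ExpMomentUpperBound.exists_isExpSmall_norm_gt [ProperSpace E] {q : E → ℝ}
    (hUB : ExpMomentUpperBound κ r q) (hr : Tendsto r atTop atTop) (a : ℝ) :
    ∃ R, IsExpSmall κ r a {z | R < ‖z‖} := by
  obtain ⟨T, b, hb, hT⟩ := (isCompact_sphere (0 : E) 1).exists_finset_forall_exists_lt
    (f := fun θ v => ⟪v, θ⟫) (fun θ => (by fun_prop : Continuous _).lowerSemicontinuous)
    (a := 1 / 2) fun v hv => ⟨v, by
      rw [real_inner_self_eq_norm_sq, mem_sphere_zero_iff_norm.1 hv]; norm_num⟩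
  set c := ∑ θ ∈ T, |q θ| + |a| + 2
  have hc : 0 < c := by positivity
  refine ⟨2 * c, (IsExpSmall.biUnion hr (T := T) (b := a + 1)
    (fun θ hθ => hUB.isExpSmall_halfSpace hr θ (c := c) ?_) (lt_add_one a)).mono_set ?_⟩
  · have := Finset.single_le_sum (f := fun θ => |q θ|) (fun _ _ => abs_nonneg _) hθ
    linarith [le_abs_self (q θ), le_abs_self a]
  · intro z hz
    have hz : 2 * c < ‖z‖ := hz
    have hz0 : 0 < ‖z‖ := by linarith
    obtain ⟨θ, hθT, hθ⟩ := hT (‖z‖⁻¹ • z) (by simp [norm_smul, hz0.ne'])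
    refine Set.mem_biUnion hθT ?_
    rw [real_inner_smul_left, lt_inv_mul_iff₀ hz0, real_inner_comm] at hθ
    show c ≤ ⟪θ, z⟫
    nlinarith

lemma ExpMomentUpperBound.exists_isExpSmall_of_isClosed [ProperSpace E] {q : E → ℝ}
    (hUB : ExpMomentUpperBound κ r q) (hr : Tendsto r atTop atTop) {C : Set E} (hC : IsClosed C)
    {a : ℝ} (h : ∀ z ∈ C, ∃ θ, a < ⟪z, θ⟫ - q θ) : ∃ b > a, IsExpSmall κ r b C := by
  obtain ⟨R, hR⟩ := hUB.exists_isExpSmall_norm_gt hr (a + 1)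
  obtain ⟨b, hab, hb⟩ := hUB.exists_isExpSmall_of_isCompact hr
    ((isCompact_closedBall 0 R).inter_left hC) fun z hz => h z hz.1
  have hmin : a < min b (a + 1) := lt_min hab (lt_add_one a)
  refine ⟨(a + min b (a + 1)) / 2, by linarith, ((hb.mono_rate hr (min_le_left _ _)).union hr
    (hR.mono_rate hr (min_le_right _ _)) (by linarith)).mono_set fun z hz => ?_⟩
  by_cases hzR : ‖z‖ ≤ R
  · exact Or.inl ⟨hz, mem_closedBall_zero_iff.2 hzR⟩
  · exact Or.inr (lt_of_not_ge hzR)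

theorem limsup_le_neg_iInf_of_isClosed [ProperSpace E] (hUB : ExpMomentUpperBound κ r p)
    (hr : Tendsto r atTop atTop) (hp0 : p 0 = 0) {C : Set E} (hC : IsClosed C) :
    limsup (fun n => (((r n)⁻¹ : ℝ) : EReal) * ENNReal.log (κ n C)) atTop
      ≤ -⨅ x ∈ C, ((⨆ θ, ENNReal.ofReal (⟪x, θ⟫ - p θ) : ℝ≥0∞) : EReal) := by
  rw [EReal.le_neg, ← EReal.ge_of_forall_gt_iff_ge]
  intro a ha
  rw [EReal.le_neg, ← EReal.coe_neg]
  obtain ⟨b, hab, hb⟩ := hUB.exists_isExpSmall_of_isClosed hr hC fun z hz =>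
    exists_lt_of_coe_lt_iSup_ofReal ⟨0, by simp [hp0]⟩ (ha.trans_le (iInf₂_le z hz))
  exact limsup_inv_mul_log_le hr (hb.mono_rate hr hab.le)

def expTilt (ν : Measure E) (t : ℝ) (η : E) : Measure E :=
  ν.withDensity fun z => ENNReal.ofReal (Real.exp (t * ⟪η, z⟫)) * (expMoment ν t η)⁻¹

lemma expTilt_apply (ν : Measure E) (t : ℝ) (η : E) {B : Set E} (hB : MeasurableSet B) :
    expTilt ν t η B
      = (∫⁻ z in B, ENNReal.ofReal (Real.exp (t * ⟪η, z⟫)) ∂ν) * (expMoment ν t η)⁻¹ := by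
  rw [expTilt, withDensity_apply _ hB, lintegral_mul_const _ (measurable_ofReal_exp_inner t η)]

lemma expTilt_univ {ν : Measure E} {t : ℝ} {η : E} (h0 : expMoment ν t η ≠ 0)
    (htop : expMoment ν t η ≠ ⊤) : expTilt ν t η Set.univ = 1 := by
  rw [expTilt_apply _ _ _ MeasurableSet.univ, Measure.restrict_univ]
  exact ENNReal.mul_inv_cancel h0 htop

lemma setLIntegral_eq_expMoment_mul_expTilt {ν : Measure E} {t : ℝ} {η : E}
    (h0 : expMoment ν t η ≠ 0) (htop : expMoment ν t η ≠ ⊤) {B : Set E} (hB : MeasurableSet B) :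
    ∫⁻ z in B, ENNReal.ofReal (Real.exp (t * ⟪η, z⟫)) ∂ν = expMoment ν t η * expTilt ν t η B := by
  rw [expTilt_apply _ _ _ hB, mul_comm, mul_assoc, ENNReal.inv_mul_cancel h0 htop, mul_one]

lemma expMoment_expTilt (ν : Measure E) (t : ℝ) (η θ : E) :
    expMoment (expTilt ν t η) t θ = expMoment ν t (θ + η) * (expMoment ν t η)⁻¹ := by
  simp only [expMoment, expTilt]
  rw [lintegral_withDensity_eq_lintegral_mul _
      ((measurable_ofReal_exp_inner t η).mul_const _) (measurable_ofReal_exp_inner t θ),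
    ← lintegral_mul_const _ (measurable_ofReal_exp_inner t (θ + η))]
  refine lintegral_congr fun z => ?_
  simp only [Pi.mul_apply, inner_add_left, mul_add, Real.exp_add,
    ENNReal.ofReal_mul (Real.exp_nonneg _)]
  ring

lemma ExpMomentUpperBound.expTilt (hUB : ExpMomentUpperBound κ r p)
    (hLB : ExpMomentLowerBound κ r p) (η : E) :
    ExpMomentUpperBound (fun n => expTilt (κ n) (r n) η) r fun θ => p (θ + η) - p η := by
  intro θ ε hε
  filter_upwards [hUB (θ + η) (ε / 2) (half_pos hε), hLB η (ε / 2) (half_pos hε)] with n hup hlow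
  rw [expMoment_expTilt]
  calc expMoment (κ n) (r n) (θ + η) * (expMoment (κ n) (r n) η)⁻¹
      ≤ ENNReal.ofReal (Real.exp (r n * (p (θ + η) + ε / 2)))
          * (ENNReal.ofReal (Real.exp (r n * (p η - ε / 2))))⁻¹ :=
        mul_le_mul' hup (ENNReal.inv_le_inv.2 hlow)
    _ = ENNReal.ofReal (Real.exp (r n * (p (θ + η) - p η + ε))) := by
        rw [← ENNReal.ofReal_inv_of_pos (Real.exp_pos _), ← Real.exp_neg,
          ← ENNReal.ofReal_mul (Real.exp_nonneg _), ← Real.exp_add]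
        ring_nf

lemma eventually_inv_two_le_expTilt_ball [ProperSpace E] (hUB : ExpMomentUpperBound κ r p)
    (hLB : ExpMomentLowerBound κ r p) (hr : Tendsto r atTop atTop) {y η : E}
    (hη : HasFDerivAt p (innerSL ℝ y) η) {ρ : ℝ} (hρ : 0 < ρ) :
    ∀ᶠ n in atTop, 2⁻¹ ≤ expTilt (κ n) (r n) η (Metric.ball y ρ) := by
  set C := {z | ρ ≤ ‖z - y‖}
  obtain ⟨c, hc, hC⟩ := (hUB.expTilt hLB η).exists_isExpSmall_of_isClosed hr
    (isClosed_le continuous_const (by fun_prop) : IsClosed C) (a := 0) fun z hz => by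
      by_contra! hz'
      -- `⟪z, ·⟫ - p` would be maximal at `η`, making `z` the gradient `y`
      have hzy : z = y := eq_of_hasFDerivAt_innerSL_of_isMaxOn hη fun θ _ => by
        have := hz' (θ - η)
        rw [sub_add_cancel, inner_sub_right] at this
        simp only [Set.mem_ofPred_eq]
        linarith
      have hz : ρ ≤ ‖z - y‖ := hz
      rw [hzy, sub_self, norm_zero] at hz
      linarith
  filter_upwards [hC, eventually_natCast_mul_exp_le hr 2 hc,
    eventually_expMoment_ne_zero_and_ne_top hUB hLB η] with n hCn h2 hZ
  have hCn' : expTilt (κ n) (r n) η C ≤ 2⁻¹ := by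
    refine ENNReal.le_inv_iff_mul_le.2 ?_
    rw [mul_comm]
    calc 2 * expTilt (κ n) (r n) η C ≤ 2 * ENNReal.ofReal (Real.exp (-(r n * c))) := by gcongr
      _ ≤ 1 := by simpa using h2
  have hcover : (Set.univ : Set E) ⊆ Metric.ball y ρ ∪ C := fun z _ => by
    by_cases hz : ‖z - y‖ < ρ
    · exact Or.inl (mem_ball_iff_norm.2 hz)
    · exact Or.inr (le_of_not_gt hz)
  have hsum : 2⁻¹ + 2⁻¹ ≤ expTilt (κ n) (r n) η (Metric.ball y ρ) + 2⁻¹ := by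
    calc 2⁻¹ + 2⁻¹ = expTilt (κ n) (r n) η Set.univ := by
          rw [ENNReal.inv_two_add_inv_two, expTilt_univ hZ.1 hZ.2]
      _ ≤ expTilt (κ n) (r n) η (Metric.ball y ρ) + expTilt (κ n) (r n) η C :=
          (measure_mono hcover).trans (measure_union_le _ _)
      _ ≤ expTilt (κ n) (r n) η (Metric.ball y ρ) + 2⁻¹ := by gcongr
  exact (ENNReal.add_le_add_iff_right (ENNReal.inv_ne_top.2 two_ne_zero)).1 hsum

lemma eventually_exp_le_measure_ball [ProperSpace E] (hUB : ExpMomentUpperBound κ r p)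
    (hLB : ExpMomentLowerBound κ r p) (hr : Tendsto r atTop atTop) {y η : E}
    (hη : HasFDerivAt p (innerSL ℝ y) η) {ρ a : ℝ} (hρ : 0 < ρ) (ha : ⟪η, y⟫ - p η < a) :
    ∀ᶠ n in atTop, ENNReal.ofReal (Real.exp (-(r n * a))) ≤ κ n (Metric.ball y ρ) := by
  -- one third of the gap each for the error in `expMoment`, the width of the ball and the factor 2
  set d := (a - (⟪η, y⟫ - p η)) / 3 with hd
  have hd0 : 0 < d := by rw [hd]; linarith
  set ρ' := min ρ (d / (‖η‖ + 1))
  have hρ' : 0 < ρ' := lt_min hρ (by positivity)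
  have hball : ∀ z ∈ Metric.ball y ρ', ⟪η, z⟫ ≤ ⟪η, y⟫ + d := fun z hz => by
    have h1 : ⟪η, z - y⟫ ≤ ‖η‖ * ‖z - y‖ := real_inner_le_norm _ _
    have h2 : ‖z - y‖ < ρ' := mem_ball_iff_norm.1 hz
    have h3 : ρ' * (‖η‖ + 1) ≤ d := (le_div_iff₀ (by positivity)).1 (min_le_right _ _)
    rw [inner_sub_right] at h1
    nlinarith [norm_nonneg η, norm_nonneg (z - y)]
  filter_upwards [eventually_inv_two_le_expTilt_ball hUB hLB hr hη hρ',
    hLB η d hd0, eventually_expMoment_ne_zero_and_ne_top hUB hLB η,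
    eventually_natCast_mul_exp_le hr 2 (sub_lt_self a hd0), hr.eventually_ge_atTop 0]
    with n hν hZ hZne h2 hrn
  set M := ENNReal.ofReal (Real.exp (r n * (⟪η, y⟫ + d)))
  have hM : M ≠ 0 := (ENNReal.ofReal_pos.2 (Real.exp_pos _)).ne'
  refine (ENNReal.mul_le_mul_iff_left hM ENNReal.ofReal_ne_top).1 ?_
  calc ENNReal.ofReal (Real.exp (-(r n * a))) * M
      = 2⁻¹ * (2 * ENNReal.ofReal (Real.exp (-(r n * a))) * M) := by
        rw [← mul_assoc, ← mul_assoc, ENNReal.inv_mul_cancel two_ne_zero ENNReal.ofNat_ne_top,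
          one_mul]
    _ ≤ 2⁻¹ * (ENNReal.ofReal (Real.exp (-(r n * (a - d)))) * M) := by gcongr; exact_mod_cast h2
    _ = 2⁻¹ * ENNReal.ofReal (Real.exp (r n * (p η - d))) := by
        rw [← ENNReal.ofReal_mul (Real.exp_nonneg _), ← Real.exp_add]
        congr 3
        rw [hd]
        ring
    _ ≤ expTilt (κ n) (r n) η (Metric.ball y ρ') * expMoment (κ n) (r n) η := mul_le_mul' hν hZ
    _ = ∫⁻ z in Metric.ball y ρ', ENNReal.ofReal (Real.exp (r n * ⟪η, z⟫)) ∂κ n := by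
        rw [setLIntegral_eq_expMoment_mul_expTilt hZne.1 hZne.2 measurableSet_ball, mul_comm]
    _ ≤ M * κ n (Metric.ball y ρ') := setLIntegral_exp_inner_le (κ n) hrn η hball
    _ ≤ κ n (Metric.ball y ρ) * M := by
        rw [mul_comm]
        gcongr
        exact min_le_left _ _

lemma eventually_exp_le_measure_of_isOpen [ProperSpace E] (hUB : ExpMomentUpperBound κ r p)
    (hLB : ExpMomentLowerBound κ r p) (hr : Tendsto r atTop atTop) (hp : Differentiable ℝ p)
    {O : Set E} (hO : IsOpen O) {x : E} (hx : x ∈ O) {a b : ℝ} (hb : ∀ θ, ⟪x, θ⟫ - p θ ≤ b)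
    (hba : b < a) :
    ∀ᶠ n in atTop, ENNReal.ofReal (Real.exp (-(r n * a))) ≤ κ n O := by
  obtain ⟨δ, hδ, hδO⟩ := Metric.isOpen_iff.1 hO x hx
  have hb0 : 0 ≤ b + p 0 := by
    have := hb 0
    rw [inner_zero_right] at this
    linarith
  set ε := δ ^ 2 / (2 * (b + p 0) + 1) with hε_def
  have hε : 0 < ε := by positivity
  obtain ⟨η, hη, hηnorm⟩ := exists_hasFDerivAt_innerSL_sub_smul hp hε hb
  set y := x - ε • η
  have hyx : dist y x < δ := by
    rw [dist_eq_norm, sub_sub_cancel_left, norm_neg, norm_smul, Real.norm_of_nonneg hε.le,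
      ← pow_lt_pow_iff_left₀ (by positivity) hδ.le two_ne_zero]
    calc (ε * ‖η‖) ^ 2 = ε * (ε * ‖η‖ ^ 2) := by ring
      _ ≤ ε * (2 * (b + p 0)) := by gcongr
      _ < ε * (2 * (b + p 0) + 1) := by gcongr; linarith
      _ = δ ^ 2 := by rw [hε_def]; field_simp
  have hexposed : ⟪η, y⟫ - p η < a := by
    have hηy : ⟪η, y⟫ = ⟪x, η⟫ - ε * ‖η‖ ^ 2 := by
      rw [inner_sub_right, real_inner_smul_right, real_inner_self_eq_norm_sq, real_inner_comm]
    nlinarith [hb η, sq_nonneg ‖η‖]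
  filter_upwards [eventually_exp_le_measure_ball hUB hLB hr hη (sub_pos.2 hyx) hexposed]
    with n hn
  exact hn.trans (measure_mono ((Metric.ball_subset_ball' (sub_add_cancel δ _).le).trans hδO))

theorem neg_iInf_le_liminf_of_isOpen [ProperSpace E] (hUB : ExpMomentUpperBound κ r p)
    (hLB : ExpMomentLowerBound κ r p) (hr : Tendsto r atTop atTop) (hp : Differentiable ℝ p)
    {O : Set E} (hO : IsOpen O) :
    -(⨅ x ∈ O, ((⨆ θ, ENNReal.ofReal (⟪x, θ⟫ - p θ) : ℝ≥0∞) : EReal))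
      ≤ liminf (fun n => (((r n)⁻¹ : ℝ) : EReal) * ENNReal.log (κ n O)) atTop := by
  rw [EReal.neg_le]
  refine le_iInf₂ fun x hx => ?_
  rw [← EReal.le_of_forall_lt_iff_le]
  intro a ha
  rw [EReal.neg_le, ← EReal.coe_neg]
  obtain ⟨b, hba, hb⟩ := exists_lt_forall_le_of_iSup_ofReal_lt ha
  exact le_liminf_inv_mul_log hr (eventually_exp_le_measure_of_isOpen hUB hLB hr hp hO hx hb hba)

end Moments

end GartnerEllis

open GartnerEllis

/-- The Gärtner–Ellis theorem on `ℝ^m`: if the normalized logarithmic moment generating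
functions converge pointwise to a finite differentiable function `p`, then the LDP holds
with rate function the Legendre transform `p*`. -/
theorem gartner_ellis
    {m : ℕ}
    (μ : ℕ → Measure (EuclideanSpace ℝ (Fin m))) (hμ : ∀ n, IsProbabilityMeasure (μ n))
    (r : ℕ → ℝ) (hr : Tendsto r atTop atTop)
    (p : EuclideanSpace ℝ (Fin m) → ℝ)
    (hp : ∀ θ : EuclideanSpace ℝ (Fin m),
      Tendsto
        (fun n => (((r n)⁻¹ : ℝ) *
          ENNReal.log (∫⁻ x, ENNReal.ofReal (Real.exp (r n * ⟪θ, x⟫)) ∂(μ n)) : EReal))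
        atTop (𝓝 ((p θ : ℝ) : EReal)))
    (hdiff : Differentiable ℝ p) :
    IsLDP μ r (fun x => ⨆ θ : EuclideanSpace ℝ (Fin m), ENNReal.ofReal (⟪x, θ⟫ - p θ)) := by
  have hp' : ∀ θ, Tendsto (fun n => (((r n)⁻¹ : ℝ) : EReal) * ENNReal.log (expMoment (μ n) (r n) θ))
      atTop (𝓝 (p θ : EReal)) := hp
  have hp0 : p 0 = 0 := by
    have h := hp' 0
    simp only [expMoment_zero, (hμ _).measure_univ, ENNReal.log_one, mul_zero] at h
    exact_mod_cast tendsto_nhds_unique h tendsto_const_nhds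
  have hUB := expMomentUpperBound_of_tendsto hr hp'
  have hLB := expMomentLowerBound_of_tendsto hr hp'
  refine ⟨lowerSemicontinuous_iSup fun θ => ?_,
    fun O hO => neg_iInf_le_liminf_of_isOpen hUB hLB hr hdiff hO, fun C hC => limsup_le_neg_iInf_of_isClosed hUB hr hp0 hC⟩
  exact (ENNReal.continuous_ofReal.comp (by fun_prop)).lowerSemicontinuous
end
end

section
/- Let 𝒳 be a compact metric space, (μ_n) a sequence of Borel probability measures on 𝒳, and r_n → ∞. Then LDP(μ_n, r_n) holds for some rate function if and only if for every x ∈ 𝒳, lim_{d→0} limsup_{n→∞} (1/r_n) log μ_n(B_d(x)) = lim_{d→0} liminf_{n→∞} (1/r_n) log μ_n(B_d(x)), where B_d(x) is the open ball of radius d around x. In that case the rate function equals x ↦ −lim_{d→0} limsup_{n→∞} (1/r_n) log μ_n(B_d(x)). -/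
/-!
Write `ballLimsup x` and `ballLiminf x` for the `d → 0` limits of the `limsup` and `liminf` of
`r n⁻¹ * log (μ n (ball x d))`. An LDP with rate `I` forces both to equal `-I x`: the open-set
bound on balls gives `-I x ≤ ballLiminf x`, while lower semicontinuity of `I` and the closed-set
bound on small closed balls give `ballLimsup x ≤ -I x`. Conversely, if they agree, `-ballLimsup`
is a rate function: it is lower semicontinuous because a ball around a nearby point sits inside a
slightly larger ball around `x`, the open-set bound follows by inscribing balls, and the
closed-set bound by covering the (compact) closed set with finitely many small balls, whose
number `k` only costs `log k / r n → 0`.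
-/

open MeasureTheory Filter Topology
open scoped ENNReal NNReal

noncomputable section

section ScaledLogMeasure

variable {α : Type*} [MeasurableSpace α] {μ : ℕ → Measure α} {r : ℕ → ℝ}

def scaledLogMeasure (μ : ℕ → Measure α) (r : ℕ → ℝ) (s : Set α) (n : ℕ) : EReal :=
  ((r n)⁻¹ : ℝ) * ENNReal.log (μ n s)

lemma scaledLogMeasure_le_iff {n : ℕ} (hrn : 0 < r n) {s : Set α} {b : ℝ} :
    scaledLogMeasure μ r s n ≤ b ↔ μ n s ≤ ENNReal.ofReal (Real.exp (r n * b)) := by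
  rw [scaledLogMeasure, EReal.coe_inv, ← EReal.div_eq_inv_mul,
    EReal.div_le_iff_le_mul (by exact_mod_cast hrn) (EReal.coe_ne_top _), ← EReal.coe_mul,
    ← EReal.exp_coe, ← ENNReal.log_le_log_iff, EReal.log_exp]

lemma scaledLogMeasure_mono {n : ℕ} (hrn : 0 ≤ r n) {s t : Set α} (hst : s ⊆ t) :
    scaledLogMeasure μ r s n ≤ scaledLogMeasure μ r t n :=
  mul_le_mul_of_nonneg_left (ENNReal.log_monotone (measure_mono hst))
    (by exact_mod_cast inv_nonneg.mpr hrn)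

lemma limsup_scaledLogMeasure_mono (hr : ∀ᶠ n in atTop, 0 ≤ r n) {s t : Set α} (hst : s ⊆ t) :
    limsup (scaledLogMeasure μ r s) atTop ≤ limsup (scaledLogMeasure μ r t) atTop :=
  limsup_le_limsup (hr.mono fun _ hrn => scaledLogMeasure_mono hrn hst)

lemma liminf_scaledLogMeasure_mono (hr : ∀ᶠ n in atTop, 0 ≤ r n) {s t : Set α} (hst : s ⊆ t) :
    liminf (scaledLogMeasure μ r s) atTop ≤ liminf (scaledLogMeasure μ r t) atTop :=
  liminf_le_liminf (hr.mono fun _ hrn => scaledLogMeasure_mono hrn hst)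

lemma limsup_scaledLogMeasure_nonpos (hμ : ∀ n, IsProbabilityMeasure (μ n))
    (hr : ∀ᶠ n in atTop, 0 ≤ r n) (s : Set α) : limsup (scaledLogMeasure μ r s) atTop ≤ 0 := by
  refine limsup_le_of_le (by isBoundedDefault) (hr.mono fun n hrn => ?_)
  calc scaledLogMeasure μ r s n ≤ scaledLogMeasure μ r Set.univ n :=
        scaledLogMeasure_mono hrn (Set.subset_univ s)
    _ = 0 := by simp [scaledLogMeasure]

lemma eventually_measure_le_of_limsup_lt (hr : ∀ᶠ n in atTop, 0 < r n) {s : Set α} {b : ℝ}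
    (h : limsup (scaledLogMeasure μ r s) atTop < b) :
    ∀ᶠ n in atTop, μ n s ≤ ENNReal.ofReal (Real.exp (r n * b)) := by
  filter_upwards [eventually_lt_of_limsup_lt h, hr] with n hn hrn
  exact (scaledLogMeasure_le_iff hrn).1 hn.le

lemma limsup_scaledLogMeasure_le_of_measure_le (hr : Tendsto r atTop atTop) {s : Set α}
    {b c : ℝ} (hc : 0 < c) (h : ∀ᶠ n in atTop, μ n s ≤ ENNReal.ofReal (c * Real.exp (r n * b))) :
    limsup (scaledLogMeasure μ r s) atTop ≤ b := by
  have hbound : ∀ᶠ n in atTop, scaledLogMeasure μ r s n ≤ ((b + Real.log c / r n : ℝ) : EReal) := by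
    filter_upwards [h, hr.eventually_gt_atTop 0] with n hn hrn
    rw [scaledLogMeasure_le_iff hrn, mul_add, mul_div_cancel₀ _ hrn.ne', Real.exp_add,
      Real.exp_log hc, mul_comm]
    exact hn
  have hlim : Tendsto (fun n => b + Real.log c / r n) atTop (𝓝 b) := by
    simpa using tendsto_const_nhds.add (hr.const_div_atTop (Real.log c))
  exact (limsup_le_limsup hbound).trans (EReal.tendsto_coe.2 hlim).limsup_eq.le

lemma IsCompact.limsup_scaledLogMeasure_le [TopologicalSpace α] (hr : Tendsto r atTop atTop)
    {K : Set α} (hK : IsCompact K) {b : ℝ}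
    (h : ∀ x ∈ K, ∃ U ∈ 𝓝 x, limsup (scaledLogMeasure μ r U) atTop < b) :
    limsup (scaledLogMeasure μ r K) atTop ≤ b := by
  choose U hU hUb using h
  obtain ⟨t, hKt⟩ := hK.elim_nhds_subcover' U hU
  have hsmall : ∀ᶠ n in atTop, ∀ x ∈ t, μ n (U x x.2) ≤ ENNReal.ofReal (Real.exp (r n * b)) :=
    (eventually_all_finset t).2 fun x _ =>
      eventually_measure_le_of_limsup_lt (hr.eventually_gt_atTop 0) (hUb x x.2)
  refine limsup_scaledLogMeasure_le_of_measure_le hr (c := t.card + 1) (by positivity) ?_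
  filter_upwards [hsmall] with n hn
  calc μ n K ≤ ∑ x ∈ t, μ n (U x x.2) := measure_mono hKt |>.trans (measure_biUnion_finset_le _ _)
    _ ≤ t.card • ENNReal.ofReal (Real.exp (r n * b)) := Finset.sum_le_card_nsmul _ _ _ hn
    _ ≤ ENNReal.ofReal ((t.card + 1) * Real.exp (r n * b)) := by
      rw [nsmul_eq_mul, ← ENNReal.ofReal_natCast, ← ENNReal.ofReal_mul (by positivity)]
      gcongr
      linarith

end ScaledLogMeasure

section BallLimits

variable {X : Type*} [PseudoMetricSpace X] [MeasurableSpace X] {μ : ℕ → Measure X} {r : ℕ → ℝ}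

def ballLimsup (μ : ℕ → Measure X) (r : ℕ → ℝ) (x : X) : EReal :=
  ⨅ (d : ℝ) (_ : 0 < d), limsup (scaledLogMeasure μ r (Metric.ball x d)) atTop

def ballLiminf (μ : ℕ → Measure X) (r : ℕ → ℝ) (x : X) : EReal :=
  ⨅ (d : ℝ) (_ : 0 < d), liminf (scaledLogMeasure μ r (Metric.ball x d)) atTop

lemma ballLiminf_le_ballLimsup (x : X) : ballLiminf μ r x ≤ ballLimsup μ r x :=
  iInf₂_mono fun _ _ => liminf_le_limsup

lemma ballLimsup_nonpos (hμ : ∀ n, IsProbabilityMeasure (μ n)) (hr : ∀ᶠ n in atTop, 0 ≤ r n)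
    (x : X) : ballLimsup μ r x ≤ 0 :=
  iInf₂_le_of_le 1 one_pos (limsup_scaledLogMeasure_nonpos hμ hr _)

lemma exists_limsup_lt_of_ballLimsup_lt {x : X} {a : EReal} (h : ballLimsup μ r x < a) :
    ∃ d > 0, limsup (scaledLogMeasure μ r (Metric.ball x d)) atTop < a := by
  simpa only [ballLimsup, iInf_lt_iff, exists_prop] using h

lemma upperSemicontinuous_ballLimsup (hr : ∀ᶠ n in atTop, 0 ≤ r n) :
    UpperSemicontinuous (ballLimsup μ r) := by
  intro x a hxa
  obtain ⟨d, hd, hda⟩ := exists_limsup_lt_of_ballLimsup_lt hxa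
  filter_upwards [Metric.ball_mem_nhds x (half_pos hd)] with y hy
  calc ballLimsup μ r y ≤ limsup (scaledLogMeasure μ r (Metric.ball y (d / 2))) atTop :=
        iInf₂_le _ (half_pos hd)
    _ ≤ limsup (scaledLogMeasure μ r (Metric.ball x d)) atTop :=
        limsup_scaledLogMeasure_mono hr
          (Metric.ball_subset_ball' (by linarith [Metric.mem_ball.1 hy]))
    _ < a := hda

end BallLimits

namespace IsLDP

variable {X : Type*} [PseudoMetricSpace X] [MeasurableSpace X] {μ : ℕ → Measure X} {r : ℕ → ℝ}
  {I : X → ℝ≥0∞}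

lemma neg_le_ballLiminf (hI : IsLDP μ r I) (x : X) : -(I x : EReal) ≤ ballLiminf μ r x :=
  le_iInf₂ fun _ hd => (EReal.neg_le_neg_iff.2 (iInf₂_le x (Metric.mem_ball_self hd))).trans
    (hI.2.1 _ Metric.isOpen_ball)

lemma ballLimsup_le_neg_of_eventually_le (hr : ∀ᶠ n in atTop, 0 ≤ r n) (hI : IsLDP μ r I)
    {x : X} {c : ℝ≥0∞} (hc : ∀ᶠ y in 𝓝 x, c ≤ I y) : ballLimsup μ r x ≤ -(c : EReal) := by
  obtain ⟨ε, hε, hball⟩ := Metric.nhds_basis_closedBall.eventually_iff.1 hc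
  calc ballLimsup μ r x ≤ limsup (scaledLogMeasure μ r (Metric.ball x ε)) atTop := iInf₂_le ε hε
    _ ≤ limsup (scaledLogMeasure μ r (Metric.closedBall x ε)) atTop :=
        limsup_scaledLogMeasure_mono hr Metric.ball_subset_closedBall
    _ ≤ -(⨅ y ∈ Metric.closedBall x ε, (I y : EReal)) := hI.2.2 _ Metric.isClosed_closedBall
    _ ≤ -(c : EReal) := EReal.neg_le_neg_iff.2 (le_iInf₂ fun _ hy => by exact_mod_cast hball hy)

lemma ballLimsup_le_neg (hr : ∀ᶠ n in atTop, 0 ≤ r n) (hI : IsLDP μ r I) (x : X) :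
    ballLimsup μ r x ≤ -(I x : EReal) := by
  rw [EReal.le_neg]
  refine le_of_forall_lt_imp_le_of_dense fun e he => ?_
  rcases lt_or_ge e 0 with he_neg | he_nonneg
  -- lower semicontinuity says nothing when `I x = 0`; the bound with `c = 0` covers that case
  · have hnonpos := hI.ballLimsup_le_neg_of_eventually_le hr (c := 0) (x := x) (by simp)
    exact he_neg.le.trans (by simpa using EReal.le_neg.1 hnonpos)
  · rw [← EReal.coe_toENNReal he_nonneg] at he ⊢
    exact EReal.le_neg.1 (hI.ballLimsup_le_neg_of_eventually_le hr
      ((hI.1 x _ (EReal.coe_ennreal_lt_coe_ennreal_iff.1 he)).mono fun _ => le_of_lt))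

end IsLDP

section RateFromBallLimits

variable {X : Type*} [PseudoMetricSpace X] [MeasurableSpace X] {μ : ℕ → Measure X} {r : ℕ → ℝ}
  {I : X → ℝ≥0∞}

lemma lowerSemicontinuous_of_coe_eq_neg_ballLimsup (hr : ∀ᶠ n in atTop, 0 ≤ r n)
    (hI : ∀ x, (I x : EReal) = -ballLimsup μ r x) : LowerSemicontinuous I := by
  intro x c (hc : c < I x)
  rw [← EReal.coe_ennreal_lt_coe_ennreal_iff, hI, EReal.lt_neg_comm] at hc
  filter_upwards [upperSemicontinuous_ballLimsup hr x _ hc] with y hy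
  show c < I y
  rwa [← EReal.coe_ennreal_lt_coe_ennreal_iff, hI, EReal.lt_neg_comm]

lemma IsOpen.neg_iInf_le_liminf_scaledLogMeasure (hr : ∀ᶠ n in atTop, 0 ≤ r n)
    (hI : ∀ x, -(I x : EReal) ≤ ballLiminf μ r x) {O : Set X} (hO : IsOpen O) :
    -(⨅ x ∈ O, (I x : EReal)) ≤ liminf (scaledLogMeasure μ r O) atTop := by
  rw [EReal.neg_le]
  refine le_iInf₂ fun x hx => EReal.neg_le.1 ?_
  obtain ⟨d, hd, hdO⟩ := Metric.isOpen_iff.1 hO x hx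
  exact (hI x).trans ((iInf₂_le d hd).trans (liminf_scaledLogMeasure_mono hr hdO))

lemma IsCompact.limsup_scaledLogMeasure_le_neg_iInf (hr : Tendsto r atTop atTop)
    (hI : ∀ x, ballLimsup μ r x ≤ -(I x : EReal)) {K : Set X} (hK : IsCompact K) :
    limsup (scaledLogMeasure μ r K) atTop ≤ -(⨅ x ∈ K, (I x : EReal)) := by
  refine EReal.le_of_forall_lt_iff_le.1 fun b hb => hK.limsup_scaledLogMeasure_le hr fun x hx => ?_
  obtain ⟨d, hd, hdb⟩ := exists_limsup_lt_of_ballLimsup_lt <|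
    (hI x).trans_lt ((EReal.neg_le_neg_iff.2 (iInf₂_le x hx)).trans_lt hb)
  exact ⟨_, Metric.ball_mem_nhds x hd, hdb⟩

theorem isLDP_iff_forall_ballLimsup_eq [CompactSpace X] (hr : Tendsto r atTop atTop) :
    IsLDP μ r I ↔
      ∀ x, ballLimsup μ r x = -(I x : EReal) ∧ ballLiminf μ r x = -(I x : EReal) := by
  have hr₀ := hr.eventually_ge_atTop 0
  constructor
  · intro hI x
    have hsup := hI.ballLimsup_le_neg hr₀ x
    have hinf := hI.neg_le_ballLiminf x
    have hle := ballLiminf_le_ballLimsup (μ := μ) (r := r) x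
    exact ⟨le_antisymm hsup (hinf.trans hle), le_antisymm (hle.trans hsup) hinf⟩
  · intro h
    refine ⟨lowerSemicontinuous_of_coe_eq_neg_ballLimsup (μ := μ) hr₀ fun x => ?_,
      fun O hO => hO.neg_iInf_le_liminf_scaledLogMeasure hr₀ fun x => (h x).2.ge,
      fun C hC => hC.isCompact.limsup_scaledLogMeasure_le_neg_iInf hr fun x => (h x).1.le⟩
    rw [(h x).1, neg_neg]

end RateFromBallLimits

/-- `lim_{d → 0}` is written as `⨅ d > 0`; the two agree since both quantities are monotone
in `d`. -/
theorem ldp_iff_ball_limits_general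
    {𝒳 : Type*} [MetricSpace 𝒳] [CompactSpace 𝒳] [MeasurableSpace 𝒳]
    (μ : ℕ → Measure 𝒳) (hμ : ∀ n, IsProbabilityMeasure (μ n))
    (r : ℕ → ℝ) (hr : Tendsto r atTop atTop) :
    ((∃ I : 𝒳 → ℝ≥0∞, IsLDP μ r I) ↔
      (∀ x : 𝒳,
        (⨅ (d : ℝ) (_ : 0 < d),
          Filter.limsup
            (fun n => (((r n)⁻¹ : ℝ) * ENNReal.log (μ n (Metric.ball x d)) : EReal)) atTop) =
        (⨅ (d : ℝ) (_ : 0 < d),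
          Filter.liminf
            (fun n => (((r n)⁻¹ : ℝ) * ENNReal.log (μ n (Metric.ball x d)) : EReal)) atTop)))
    ∧
    (∀ I : 𝒳 → ℝ≥0∞, IsLDP μ r I → ∀ x : 𝒳,
      (I x : EReal) =
        -(⨅ (d : ℝ) (_ : 0 < d),
          Filter.limsup
            (fun n => (((r n)⁻¹ : ℝ) * ENNReal.log (μ n (Metric.ball x d)) : EReal)) atTop)) := by
  refine ⟨⟨fun ⟨I, hI⟩ x => ?_, fun h => ?_⟩, fun I hI x => ?_⟩
  · obtain ⟨hsup, hinf⟩ := (isLDP_iff_forall_ballLimsup_eq hr).1 hI x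
    exact hsup.trans hinf.symm
  · refine ⟨fun x => (-ballLimsup μ r x).toENNReal,
      (isLDP_iff_forall_ballLimsup_eq hr).2 fun x => ?_⟩
    have hnonneg : 0 ≤ -ballLimsup μ r x :=
      EReal.neg_nonneg.2 (ballLimsup_nonpos hμ (hr.eventually_ge_atTop 0) x)
    rw [EReal.coe_toENNReal hnonneg, neg_neg]
    exact ⟨rfl, (h x).symm⟩
  · change (I x : EReal) = -ballLimsup μ r x
    rw [((isLDP_iff_forall_ballLimsup_eq hr).1 hI x).1, neg_neg]

/-- On a compact metric space an LDP holds (for some rate function) iff for every point the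
`d → 0` limits of the normalized `limsup` and `liminf` of `log μₙ(B_d(x))` coincide; the rate
function is then minus this common limit.  (Since these quantities are monotone in `d`, the
limit as `d → 0` is the infimum over `d > 0`.) -/
theorem ldp_iff_ball_limits
    {𝒳 : Type*} [MetricSpace 𝒳] [CompactSpace 𝒳] [MeasurableSpace 𝒳] [BorelSpace 𝒳]
    (μ : ℕ → Measure 𝒳) (hμ : ∀ n, IsProbabilityMeasure (μ n))
    (r : ℕ → ℝ) (hr : Tendsto r atTop atTop) :
    ((∃ I : 𝒳 → ℝ≥0∞, IsLDP μ r I) ↔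
      (∀ x : 𝒳,
        (⨅ (d : ℝ) (_ : 0 < d),
          Filter.limsup
            (fun n => (((r n)⁻¹ : ℝ) * ENNReal.log (μ n (Metric.ball x d)) : EReal)) atTop) =
        (⨅ (d : ℝ) (_ : 0 < d),
          Filter.liminf
            (fun n => (((r n)⁻¹ : ℝ) * ENNReal.log (μ n (Metric.ball x d)) : EReal)) atTop)))
    ∧
    (∀ I : 𝒳 → ℝ≥0∞, IsLDP μ r I → ∀ x : 𝒳,
      (I x : EReal) =
        -(⨅ (d : ℝ) (_ : 0 < d),
          Filter.limsup
            (fun n => (((r n)⁻¹ : ℝ) * ENNReal.log (μ n (Metric.ball x d)) : EReal)) atTop)) :=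
  ldp_iff_ball_limits_general μ hμ r hr
end
end

section
/- (Fundamental Theorem of Optimal Transport) Let X, Y ⊂ ℝ^n be compact, μ ∈ P(X), ν ∈ P(Y), and let c(x,y) = −⟨x,y⟩. For γ ∈ Π(μ,ν), the following are equivalent: (i) γ minimizes ∫_{X×Y} c dγ̃ over γ̃ ∈ Π(μ,ν); (ii) the support of γ is cyclically monotone; (iii) there exists a convex function f : ℝ^n → ℝ such that supp γ ⊆ gr(∂f) := {(x,y) : y ∈ ∂f(x)}. -/
/-!
(iii) ⇒ (i): for `g y = sup_{x ∈ X} (⟪x, y⟫ - f x)` we have `⟪x, y⟫ ≤ f x + g y` on `X × Y`, with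
equality when `x ∈ X` and `y ∈ ∂f x`. Integrating against any plan with the same marginals gives
`∫ c dγ = -∫ f dμ - ∫ g dν ≤ ∫ c dγ'`.

(i) ⇒ (ii): if points `(xᵢ, yᵢ)` of `supp γ` violated cyclic monotonicity for `σ`, condition `γ` on
small balls around them. Removing a small multiple `w` of each piece and putting back, for each `i`,
`w` times the product of the first marginal of piece `i` with the second marginal of piece `σ i`
keeps both marginals. By continuity of the cost it changes the total cost by about
`w (∑ c(xᵢ, y_{σ i}) - ∑ c(xᵢ, yᵢ)) < 0`.

(ii) ⇒ (iii) is Rockafellar's construction: `f x` is the supremum, over chains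
`(x₀, y₀), …, (x_k, y_k)` in `supp γ` with fixed start `(x₀, y₀) = a`, of
`∑ ⟪x_{i+1} - x_i, y_i⟫ + ⟪x - x_k, y_k⟫`. This is a supremum of affine functions. Cyclic
monotonicity says a closed chain has nonpositive value, which together with the boundedness of `Y`
makes `f` finite. Appending `(x, y)` to a chain shows that `y ∈ ∂f x`.
-/

open MeasureTheory Filter Topology RealInnerProductSpace
open scoped ENNReal NNReal

noncomputable section

/-- A set `A ⊆ ℝ^n × ℝ^n` is cyclically monotone if for all finite families of points of `A`
and all permutations `σ`, `Σ −⟨xᵢ,yᵢ⟩ ≤ Σ −⟨xᵢ,y_{σ(i)}⟩`. -/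
def CyclicallyMonotone {n : ℕ} (A : Set (EuclideanSpace ℝ (Fin n) × EuclideanSpace ℝ (Fin n))) :
    Prop :=
  ∀ (m : ℕ) (p : Fin m → EuclideanSpace ℝ (Fin n) × EuclideanSpace ℝ (Fin n)),
    (∀ i, p i ∈ A) → ∀ σ : Equiv.Perm (Fin m),
      ∑ i, -⟪(p i).1, (p i).2⟫ ≤ ∑ i, -⟪(p i).1, (p (σ i)).2⟫

/-- The subdifferential of `f` at `x`. -/
def SubDiff {n : ℕ} (f : EuclideanSpace ℝ (Fin n) → ℝ) (x : EuclideanSpace ℝ (Fin n)) :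
    Set (EuclideanSpace ℝ (Fin n)) :=
  {y | ∀ z, f x + ⟪z - x, y⟫ ≤ f z}

/-- The (topological) support of a measure: points all of whose open neighborhoods have
positive measure. -/
def msupport {X : Type*} [TopologicalSpace X] [MeasurableSpace X] (γ : Measure X) : Set X :=
  {p | ∀ U : Set X, IsOpen U → p ∈ U → 0 < γ U}

theorem msupport_eq_support {α : Type*} [TopologicalSpace α] [MeasurableSpace α]
    (γ : Measure α) : msupport γ = γ.support := by
  rw [Measure.support_eq_forall_isOpen]
  ext p
  exact forall_congr' fun U => ⟨fun h hp hU => h hU hp, fun h hp hU => h hU hp⟩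

theorem isProbabilityMeasure_and_ae_mem_prod_of_map {α β : Type*} [MeasurableSpace α]
    [MeasurableSpace β] {μ : Measure α} [IsProbabilityMeasure μ] {ν : Measure β} {s : Set α}
    {t : Set β} (hs : MeasurableSet s) (ht : MeasurableSet t) (hμs : μ s = 1) (hνt : ν t = 1)
    {ρ : Measure (α × β)} (h₁ : ρ.map Prod.fst = μ) (h₂ : ρ.map Prod.snd = ν) :
    IsProbabilityMeasure ρ ∧ ∀ᵐ p ∂ρ, p ∈ s ×ˢ t := by
  subst h₁ h₂
  have hρ := Measure.isProbabilityMeasure_of_map (μ := ρ) Prod.fst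
  have := Measure.isProbabilityMeasure_map (μ := ρ) measurable_snd.aemeasurable
  exact ⟨hρ, ((ae_map_iff measurable_fst.aemeasurable hs).1 ((mem_ae_iff_prob_eq_one hs).2 hμs)).and
    ((ae_map_iff measurable_snd.aemeasurable ht).1 ((mem_ae_iff_prob_eq_one ht).2 hνt))⟩

theorem Continuous.integrable_of_ae_mem_isCompact {α : Type*} [TopologicalSpace α]
    [MeasurableSpace α] [OpensMeasurableSpace α] {ρ : Measure α} [IsFiniteMeasure ρ]
    {K : Set α} (hK : IsCompact K) {h : α → ℝ} (hh : Continuous h) (hρ : ∀ᵐ x ∂ρ, x ∈ K) :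
    Integrable h ρ := by
  obtain ⟨C, hC⟩ := hK.exists_bound_of_continuousOn hh.continuousOn
  exact .of_bound hh.aestronglyMeasurable C (hρ.mono hC)

theorem convexOn_ciSup {ι E : Type*} [Nonempty ι] [AddCommMonoid E] [Module ℝ E] {s : Set E}
    {φ : ι → E → ℝ} (hφ : ∀ i, ConvexOn ℝ s (φ i))
    (hbdd : ∀ x ∈ s, BddAbove (Set.range fun i => φ i x)) (hs : Convex ℝ s) :
    ConvexOn ℝ s fun x => ⨆ i, φ i x := by
  refine ⟨hs, fun x hx y hy a b ha hb hab => ciSup_le fun i => ?_⟩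
  show _ ≤ a * (⨆ j, φ j x) + b * ⨆ j, φ j y
  calc φ i (a • x + b • y) ≤ a * φ i x + b * φ i y := (hφ i).2 hx hy ha hb hab
    _ ≤ a * (⨆ j, φ j x) + b * ⨆ j, φ j y := by
      gcongr
      exacts [le_ciSup (hbdd x hx) i, le_ciSup (hbdd y hy) i]

theorem convexOn_inner_add {F : Type*} [NormedAddCommGroup F] [InnerProductSpace ℝ F] (y : F)
    (a : ℝ) : ConvexOn ℝ Set.univ fun x : F => ⟪x, y⟫ + a :=
  (((innerₛₗ ℝ).flip y).convexOn convex_univ).add_const a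

structure Chain {α : Type*} (A : Set α) (a : α) where
  length : ℕ
  point : Fin (length + 1) → α
  mem : ∀ i, point i ∈ A
  point_zero : point 0 = a

namespace Chain

variable {α : Type*} {A : Set α} {a : α}

theorem nonempty (ha : a ∈ A) : Nonempty (Chain A a) := ⟨⟨0, fun _ => a, fun _ => ha, rfl⟩⟩

def snoc (c : Chain A a) (p : α) (hp : p ∈ A) : Chain A a where
  length := c.length + 1
  point := Fin.snoc c.point p
  mem := Fin.lastCases (by simpa using hp) fun i => by simpa using c.mem i
  point_zero := by simpa using c.point_zero

end Chain

section Rockafellar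

variable {n : ℕ}

local notation "E" => EuclideanSpace ℝ (Fin n)

theorem CyclicallyMonotone.sum_inner_finRotate_le {A : Set (E × E)} (hA : CyclicallyMonotone A)
    {m : ℕ} (p : Fin m → E × E) (hp : ∀ i, p i ∈ A) :
    ∑ i, ⟪(p (finRotate m i)).1, (p i).2⟫ ≤ ∑ i, ⟪(p i).1, (p i).2⟫ := by
  have h := hA m p hp (finRotate m).symm
  rw [← Equiv.sum_comp (finRotate m) fun i => -⟪(p i).1, (p ((finRotate m).symm i)).2⟫] at h
  simp only [Equiv.symm_apply_apply, Finset.sum_neg_distrib] at h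
  linarith

def chainValue {k : ℕ} (q : Fin (k + 1) → E × E) (x : E) : ℝ :=
  ∑ i : Fin k, ⟪(q i.succ).1 - (q i.castSucc).1, (q i.castSucc).2⟫ +
    ⟪x - (q (Fin.last k)).1, (q (Fin.last k)).2⟫

theorem chainValue_eq_add {k : ℕ} (q : Fin (k + 1) → E × E) (x x' : E) :
    chainValue q x = chainValue q x' + ⟪x - x', (q (Fin.last k)).2⟫ := by
  simp only [chainValue, inner_sub_left]
  ring

theorem convexOn_chainValue {k : ℕ} (q : Fin (k + 1) → E × E) :
    ConvexOn ℝ Set.univ (chainValue q) := by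
  have h : chainValue q = fun x => ⟪x, (q (Fin.last k)).2⟫ + chainValue q 0 :=
    funext fun x => by rw [chainValue_eq_add q x 0, sub_zero, add_comm]
  exact h ▸ convexOn_inner_add _ _

theorem chainValue_snoc {k : ℕ} (q : Fin (k + 1) → E × E) (p : E × E) (x : E) :
    chainValue (Fin.snoc q p : Fin (k + 2) → E × E) x = chainValue q p.1 + ⟪x - p.1, p.2⟫ := by
  simp [chainValue, Fin.sum_univ_castSucc, Fin.succ_castSucc, -Fin.castSucc_succ]

theorem CyclicallyMonotone.chainValue_nonpos {A : Set (E × E)} (hA : CyclicallyMonotone A)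
    {k : ℕ} (q : Fin (k + 1) → E × E) (hq : ∀ i, q i ∈ A) : chainValue q (q 0).1 ≤ 0 := by
  have hval : chainValue q (q 0).1 =
      ∑ i, ⟪(q (finRotate _ i)).1, (q i).2⟫ - ∑ i, ⟪(q i).1, (q i).2⟫ := by
    rw [← Finset.sum_sub_distrib, Fin.sum_univ_castSucc]
    simp [chainValue, inner_sub_left]
  linarith [hA.sum_inner_finRotate_le q hq]

theorem CyclicallyMonotone.chainValue_le {A : Set (E × E)} (hA : CyclicallyMonotone A) {R : ℝ}
    (hR : ∀ p ∈ A, ‖p.2‖ ≤ R) {k : ℕ} (q : Fin (k + 1) → E × E) (hq : ∀ i, q i ∈ A) (x : E) :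
    chainValue q x ≤ R * ‖x - (q 0).1‖ := by
  calc chainValue q x = chainValue q (q 0).1 + ⟪x - (q 0).1, (q (Fin.last k)).2⟫ :=
        chainValue_eq_add q x _
    _ ≤ 0 + ‖x - (q 0).1‖ * R := by
      gcongr
      · exact hA.chainValue_nonpos q hq
      · exact (real_inner_le_norm _ _).trans (by gcongr; exact hR _ (hq _))
    _ = R * ‖x - (q 0).1‖ := by ring

def rockafellarPotential (A : Set (E × E)) (a : E × E) (x : E) : ℝ :=
  ⨆ c : Chain A a, chainValue c.point x

theorem CyclicallyMonotone.exists_convexOn_subset_subDiff {A : Set (E × E)}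
    (hA : CyclicallyMonotone A) {R : ℝ} (hR : ∀ p ∈ A, ‖p.2‖ ≤ R) :
    ∃ f : E → ℝ, ConvexOn ℝ Set.univ f ∧ A ⊆ {p | p.2 ∈ SubDiff f p.1} := by
  rcases A.eq_empty_or_nonempty with rfl | ⟨a, ha⟩
  · exact ⟨0, convexOn_const 0 convex_univ, Set.empty_subset _⟩
  have := Chain.nonempty ha
  have hbdd (x : E) : BddAbove (Set.range fun c : Chain A a => chainValue c.point x) :=
    ⟨R * ‖x - a.1‖, Set.forall_mem_range.2 fun c => by
      simpa only [c.point_zero] using hA.chainValue_le hR c.point c.mem x⟩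
  refine ⟨rockafellarPotential A a,
    convexOn_ciSup (fun c => convexOn_chainValue c.point) (fun x _ => hbdd x) convex_univ,
    fun p hp z => le_sub_iff_add_le.1 (ciSup_le fun c => le_sub_iff_add_le.2 ?_)⟩
  calc chainValue c.point p.1 + ⟪z - p.1, p.2⟫ = chainValue (c.snoc p hp).point z :=
        (chainValue_snoc c.point p z).symm
    _ ≤ rockafellarPotential A a z := le_ciSup (hbdd z) _

end Rockafellar

theorem integral_le_of_add_le_of_ae_eq {α β : Type*} [MeasurableSpace α] [MeasurableSpace β]
    {c : α × β → ℝ} {F : α → ℝ} {G : β → ℝ} {γ γ' : Measure (α × β)}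
    (h₁ : γ'.map Prod.fst = γ.map Prod.fst) (h₂ : γ'.map Prod.snd = γ.map Prod.snd)
    (hF : Integrable F (γ.map Prod.fst)) (hG : Integrable G (γ.map Prod.snd))
    (hc : Integrable c γ') (hle : ∀ᵐ p ∂γ', F p.1 + G p.2 ≤ c p)
    (heq : ∀ᵐ p ∂γ, c p = F p.1 + G p.2) :
    ∫ p, c p ∂γ ≤ ∫ p, c p ∂γ' := by
  have hsplit (ρ : Measure (α × β)) (hρ₁ : ρ.map Prod.fst = γ.map Prod.fst)
      (hρ₂ : ρ.map Prod.snd = γ.map Prod.snd) :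
      Integrable (fun p => F p.1 + G p.2) ρ ∧
        ∫ p, F p.1 + G p.2 ∂ρ = ∫ x, F x ∂γ.map Prod.fst + ∫ y, G y ∂γ.map Prod.snd := by
    rw [← hρ₁] at hF ⊢
    rw [← hρ₂] at hG ⊢
    have hF' : Integrable (fun p => F p.1) ρ := hF.comp_measurable measurable_fst
    have hG' : Integrable (fun p => G p.2) ρ := hG.comp_measurable measurable_snd
    refine ⟨hF'.add hG', ?_⟩
    rw [integral_add hF' hG', integral_map measurable_fst.aemeasurable hF.1,
      integral_map measurable_snd.aemeasurable hG.1]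
  calc ∫ p, c p ∂γ = ∫ p, F p.1 + G p.2 ∂γ := integral_congr_ae heq
    _ = ∫ p, F p.1 + G p.2 ∂γ' := by rw [(hsplit γ rfl rfl).2, (hsplit γ' h₁ h₂).2]
    _ ≤ ∫ p, c p ∂γ' := integral_mono_ae (hsplit γ' h₁ h₂).1 hc hle

section Conjugate

variable {n : ℕ}

local notation "E" => EuclideanSpace ℝ (Fin n)

def conjugateOn (X : Set E) (f : E → ℝ) (y : E) : ℝ :=
  ⨆ x : X, ⟪(x : E), y⟫ - f x

theorem bddAbove_conjugateOn {X : Set E} (hX : IsCompact X) {f : E → ℝ} (hf : Continuous f)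
    (y : E) : BddAbove (Set.range fun x : X => ⟪(x : E), y⟫ - f x) := by
  simpa only [Set.image_eq_range] using hX.bddAbove_image (f := fun x => ⟪x, y⟫ - f x)
    ((continuous_id.inner continuous_const).sub hf).continuousOn

theorem inner_sub_le_conjugateOn {X : Set E} (hX : IsCompact X) {f : E → ℝ} (hf : Continuous f)
    {x : E} (hx : x ∈ X) (y : E) : ⟪x, y⟫ - f x ≤ conjugateOn X f y :=
  le_ciSup (bddAbove_conjugateOn hX hf y) ⟨x, hx⟩

theorem conjugateOn_eq_of_mem_subDiff {X : Set E} {f : E → ℝ} {x y : E} (hx : x ∈ X)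
    (hy : y ∈ SubDiff f x) : conjugateOn X f y = ⟪x, y⟫ - f x := by
  have : Nonempty X := ⟨⟨x, hx⟩⟩
  have hle (z : X) : ⟪(z : E), y⟫ - f z ≤ ⟪x, y⟫ - f x := by
    have := hy z
    rw [inner_sub_left] at this
    linarith
  exact le_antisymm (ciSup_le hle) (le_ciSup ⟨_, Set.forall_mem_range.2 hle⟩ ⟨x, hx⟩)

theorem continuous_conjugateOn {X : Set E} (hX : IsCompact X) {f : E → ℝ} (hf : Continuous f) :
    Continuous (conjugateOn X f) := by
  rcases X.eq_empty_or_nonempty with rfl | ⟨x, hx⟩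
  · have : conjugateOn (∅ : Set E) f = fun _ => 0 := by
      ext y
      exact Real.iSup_of_isEmpty _
    exact this ▸ continuous_const
  have : Nonempty X := ⟨⟨x, hx⟩⟩
  have hconv : ConvexOn ℝ Set.univ (conjugateOn X f) :=
    convexOn_ciSup
      (fun x => by simpa [real_inner_comm, sub_eq_add_neg] using convexOn_inner_add (x : E) (-f x))
      (fun y _ => bddAbove_conjugateOn hX hf y) convex_univ
  exact continuousOn_univ.1 (hconv.continuousOn isOpen_univ)

theorem integral_neg_inner_le_of_msupport_subset_subDiff {X Y : Set E} (hX : IsCompact X)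
    (hY : IsCompact Y) {γ γ' : Measure (E × E)} [IsFiniteMeasure γ] [IsFiniteMeasure γ']
    (h₁ : γ'.map Prod.fst = γ.map Prod.fst) (h₂ : γ'.map Prod.snd = γ.map Prod.snd)
    (hγ : ∀ᵐ p ∂γ, p ∈ X ×ˢ Y) (hγ' : ∀ᵐ p ∂γ', p ∈ X ×ˢ Y) {f : E → ℝ}
    (hf : ConvexOn ℝ Set.univ f) (hsub : msupport γ ⊆ {p | p.2 ∈ SubDiff f p.1}) :
    ∫ p, -⟪p.1, p.2⟫ ∂γ ≤ ∫ p, -⟪p.1, p.2⟫ ∂γ' := by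
  have hfc : Continuous f := continuousOn_univ.1 (hf.continuousOn isOpen_univ)
  have hgc := continuous_conjugateOn hX hfc
  refine integral_le_of_add_le_of_ae_eq h₁ h₂ (F := fun x => -f x)
    (G := fun y => -conjugateOn X f y) ?_ ?_ ?_ ?_ ?_
  · exact hfc.neg.integrable_of_ae_mem_isCompact hX
      ((ae_map_iff measurable_fst.aemeasurable hX.measurableSet).2 (hγ.mono fun p hp => hp.1))
  · exact hgc.neg.integrable_of_ae_mem_isCompact hY
      ((ae_map_iff measurable_snd.aemeasurable hY.measurableSet).2 (hγ.mono fun p hp => hp.2))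
  · exact (continuous_fst.inner continuous_snd).neg.integrable_of_ae_mem_isCompact (hX.prod hY) hγ'
  · filter_upwards [hγ'] with p hp
    linarith [inner_sub_le_conjugateOn hX hfc hp.1 p.2]
  · have hsupp : ∀ᵐ p ∂γ, p ∈ msupport γ := msupport_eq_support γ ▸ Measure.support_mem_ae
    filter_upwards [hγ, hsupp] with p hp hps
    rw [conjugateOn_eq_of_mem_subDiff hp.1 (hsub hps)]
    ring

end Conjugate

section Rematch

open ProbabilityTheory

variable {Ω α β ι : Type*} [MeasurableSpace Ω] [MeasurableSpace α] [MeasurableSpace β] [Fintype ι]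

def rematch (ρ : ι → Measure (α × β)) (σ : Equiv.Perm ι) : Measure (α × β) :=
  ∑ i, ((ρ i).map Prod.fst).prod ((ρ (σ i)).map Prod.snd)

theorem map_fst_rematch (ρ : ι → Measure (α × β)) [∀ i, IsProbabilityMeasure (ρ i)]
    (σ : Equiv.Perm ι) : (rematch ρ σ).map Prod.fst = (∑ i, ρ i).map Prod.fst := by
  rw [rematch, Measure.map_finset_sum measurable_fst.aemeasurable,
    Measure.map_finset_sum measurable_fst.aemeasurable]
  refine Finset.sum_congr rfl fun i _ => ?_
  rw [Measure.map_fst_prod, Measure.map_apply measurable_snd MeasurableSet.univ,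
    Set.preimage_univ, measure_univ, one_smul]

theorem map_snd_rematch (ρ : ι → Measure (α × β)) [∀ i, IsProbabilityMeasure (ρ i)]
    (σ : Equiv.Perm ι) : (rematch ρ σ).map Prod.snd = (∑ i, ρ i).map Prod.snd := by
  rw [rematch, Measure.map_finset_sum measurable_snd.aemeasurable,
    Measure.map_finset_sum measurable_snd.aemeasurable,
    ← Equiv.sum_comp σ fun i => (ρ i).map Prod.snd]
  refine Finset.sum_congr rfl fun i _ => ?_
  rw [Measure.map_snd_prod, Measure.map_apply measurable_fst MeasurableSet.univ,
    Set.preimage_univ, measure_univ, one_smul]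

theorem ae_mem_prod_map_fst_prod_map_snd {ρ ρ' : Measure (α × β)} [SFinite ρ'] {s s' : Set α}
    {t t' : Set β} (hs : MeasurableSet s) (ht' : MeasurableSet t') (h : ∀ᵐ q ∂ρ, q ∈ s ×ˢ t)
    (h' : ∀ᵐ q ∂ρ', q ∈ s' ×ˢ t') :
    ∀ᵐ q ∂(ρ.map Prod.fst).prod (ρ'.map Prod.snd), q ∈ s ×ˢ t' :=
  (Measure.quasiMeasurePreserving_fst.ae
      ((ae_map_iff measurable_fst.aemeasurable hs).2 (h.mono fun _ hq => hq.1))).and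
    (Measure.quasiMeasurePreserving_snd.ae
      ((ae_map_iff measurable_snd.aemeasurable ht').2 (h'.mono fun _ hq => hq.2)))

theorem smul_sum_cond_le (γ : Measure Ω) {A : ι → Set Ω} {w : ℝ≥0∞}
    (hw : ∀ i, w ≤ γ (A i) / Fintype.card ι) : w • ∑ i, γ[|A i] ≤ γ := by
  have hterm (i : ι) : w • γ[|A i] ≤ (Fintype.card ι : ℝ≥0∞)⁻¹ • γ := by
    rw [ProbabilityTheory.cond, smul_smul]
    calc (w * (γ (A i))⁻¹) • γ.restrict (A i) ≤ (Fintype.card ι : ℝ≥0∞)⁻¹ • γ.restrict (A i) := by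
          gcongr
          calc w * (γ (A i))⁻¹ ≤ γ (A i) / Fintype.card ι * (γ (A i))⁻¹ := by gcongr; exact hw i
            _ = (Fintype.card ι : ℝ≥0∞)⁻¹ * (γ (A i) * (γ (A i))⁻¹) := by
              rw [ENNReal.div_eq_inv_mul, mul_assoc]
            _ ≤ (Fintype.card ι : ℝ≥0∞)⁻¹ * 1 := by gcongr; exact ENNReal.mul_inv_le_one _
            _ = _ := mul_one _
      _ ≤ (Fintype.card ι : ℝ≥0∞)⁻¹ • γ := by gcongr; exact Measure.restrict_le_self
  calc w • ∑ i, γ[|A i] = ∑ i, w • γ[|A i] := Finset.smul_sum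
    _ ≤ ∑ _i : ι, (Fintype.card ι : ℝ≥0∞)⁻¹ • γ := Finset.sum_le_sum fun i _ => hterm i
    _ = ((Fintype.card ι : ℝ≥0∞) * (Fintype.card ι : ℝ≥0∞)⁻¹) • γ := by
      rw [Finset.sum_const, Finset.card_univ, ← smul_smul, Nat.cast_smul_eq_nsmul]
    _ ≤ (1 : ℝ≥0∞) • γ := by gcongr; exact ENNReal.mul_inv_le_one _
    _ = γ := one_smul _ _

theorem map_sub_add_eq {Ω' : Type*} [MeasurableSpace Ω'] {γ μ ν : Measure Ω} [IsFiniteMeasure μ]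
    (hμ : μ ≤ γ) {f : Ω → Ω'} (hf : Measurable f) (hmap : ν.map f = μ.map f) :
    (γ - μ + ν).map f = γ.map f := by
  rw [Measure.map_add _ _ hf, hmap, ← Measure.map_add _ _ hf, Measure.sub_add_cancel_of_le hμ]

theorem integral_sub_add_measure {γ μ ν : Measure Ω} [IsFiniteMeasure μ] (hμ : μ ≤ γ)
    {h : Ω → ℝ} (hγ : Integrable h γ) (hν : Integrable h ν) :
    ∫ x, h x ∂(γ - μ + ν) = ∫ x, h x ∂γ - ∫ x, h x ∂μ + ∫ x, h x ∂ν := by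
  have hsub : Integrable h (γ - μ) := hγ.mono_measure Measure.sub_le
  have hγ_eq := integral_add_measure hsub (hγ.mono_measure hμ)
  rw [Measure.sub_add_cancel_of_le hμ] at hγ_eq
  rw [integral_add_measure hsub hν, hγ_eq]
  ring

theorem exists_pos_ne_top_forall_le {a : ι → ℝ≥0∞} (ha : ∀ i, a i ≠ 0) :
    ∃ w : ℝ≥0∞, 0 < w ∧ w ≠ ∞ ∧ ∀ i, w ≤ a i :=
  ⟨min 1 (Finset.univ.inf a),
    lt_min one_pos ((Finset.lt_inf_iff ENNReal.zero_lt_top).2 fun i _ => pos_iff_ne_zero.2 (ha i)),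
    ((min_le_left _ _).trans_lt ENNReal.one_lt_top).ne,
    fun i => (min_le_right _ _).trans (Finset.inf_le (Finset.mem_univ i))⟩

theorem exists_map_eq_integral_eq_add_mul_rematch (γ : Measure (α × β)) [IsFiniteMeasure γ]
    {A : ι → Set (α × β)} (hA : ∀ i, γ (A i) ≠ 0) (σ : Equiv.Perm ι) {h : α × β → ℝ}
    (hγ : Integrable h γ) (hrematch : Integrable h (rematch (fun i => γ[|A i]) σ)) :
    ∃ γ' : Measure (α × β), γ'.map Prod.fst = γ.map Prod.fst ∧
      γ'.map Prod.snd = γ.map Prod.snd ∧ ∃ t : ℝ, 0 < t ∧ ∫ q, h q ∂γ' =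
        ∫ q, h q ∂γ + t * (∫ q, h q ∂rematch (fun i => γ[|A i]) σ - ∫ q, h q ∂(∑ i, γ[|A i])) := by
  have (i : ι) : IsProbabilityMeasure γ[|A i] := cond_isProbabilityMeasure (hA i)
  obtain ⟨w, hw0, hwtop, hw⟩ := exists_pos_ne_top_forall_le (a := fun i => γ (A i) / Fintype.card ι)
    fun i => (ENNReal.div_pos (hA i) (ENNReal.natCast_ne_top _)).ne'
  have hsub := smul_sum_cond_le γ hw
  have := isFiniteMeasure_of_le γ hsub
  refine ⟨γ - w • ∑ i, γ[|A i] + w • rematch (fun i => γ[|A i]) σ,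
    map_sub_add_eq hsub measurable_fst
      (by rw [Measure.map_smul, map_fst_rematch, Measure.map_smul]),
    map_sub_add_eq hsub measurable_snd
      (by rw [Measure.map_smul, map_snd_rematch, Measure.map_smul]),
    w.toReal, ENNReal.toReal_pos hw0.ne' hwtop, ?_⟩
  rw [integral_sub_add_measure hsub hγ (hrematch.smul_measure hwtop), integral_smul_measure,
    integral_smul_measure, smul_eq_mul, smul_eq_mul]
  ring

theorem abs_integral_sub_le_of_ae {ρ : Measure Ω} [IsProbabilityMeasure ρ] {h : Ω → ℝ}
    (hh : AEStronglyMeasurable h ρ) {r η : ℝ} (hb : ∀ᵐ x ∂ρ, |h x - r| ≤ η) :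
    Integrable h ρ ∧ |∫ x, h x ∂ρ - r| ≤ η := by
  have hint : Integrable h ρ := .of_bound hh (|r| + η) <| hb.mono fun x hx => by
    rw [Real.norm_eq_abs]
    linarith [abs_sub_abs_le_abs_sub (h x) r]
  refine ⟨hint, ?_⟩
  have := norm_integral_le_of_norm_le_const (μ := ρ) (f := fun x => h x - r) hb
  rwa [integral_sub hint (integrable_const r), integral_const, probReal_univ, one_smul,
    mul_one] at this

theorem abs_integral_sum_sub_le {ρ : ι → Measure Ω} [∀ i, IsProbabilityMeasure (ρ i)]
    {h : Ω → ℝ} (hh : ∀ i, AEStronglyMeasurable h (ρ i)) {r : ι → ℝ} {η : ℝ}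
    (hb : ∀ i, ∀ᵐ x ∂ρ i, |h x - r i| ≤ η) :
    Integrable h (∑ i, ρ i) ∧ |∫ x, h x ∂(∑ i, ρ i) - ∑ i, r i| ≤ Fintype.card ι * η := by
  have hi (i : ι) := abs_integral_sub_le_of_ae (hh i) (hb i)
  refine ⟨integrable_finsetSum_measure.2 fun i _ => (hi i).1, ?_⟩
  rw [integral_finsetSum_measure fun i _ => (hi i).1, ← Finset.sum_sub_distrib]
  calc |∑ i, (∫ x, h x ∂ρ i - r i)| ≤ ∑ i, |∫ x, h x ∂ρ i - r i| := Finset.abs_sum_le_sum_abs _ _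
    _ ≤ ∑ _i : ι, η := Finset.sum_le_sum fun i _ => (hi i).2
    _ = Fintype.card ι * η := by simp

end Rematch

theorem Continuous.exists_pos_forall_ball_dist_lt {X Y κ : Type*} [PseudoMetricSpace X]
    [PseudoMetricSpace Y] [Finite κ] {F : X → Y} (hF : Continuous F) (x : κ → X) {η : ℝ}
    (hη : 0 < η) : ∃ δ > 0, ∀ k, ∀ y ∈ Metric.ball (x k) δ, dist (F y) (F (x k)) < η := by
  have h (k : κ) : ∀ᶠ δ in 𝓝 (0 : ℝ), ∀ y ∈ Metric.ball (x k) δ, dist (F y) (F (x k)) < η := by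
    obtain ⟨ε, hε, h⟩ := Metric.continuous_iff.1 hF (x k) η hη
    filter_upwards [eventually_le_nhds hε] with δ hδ y hy using h y (hy.trans_le hδ)
  obtain ⟨δ, hδ, hδ0⟩ := (((Filter.eventually_all.2 h).filter_mono nhdsWithin_le_nhds).and
    (self_mem_nhdsWithin (s := Set.Ioi (0 : ℝ)))).exists
  exact ⟨δ, hδ0, hδ⟩

open ProbabilityTheory in
theorem sum_le_sum_of_forall_integral_le {α β : Type*} [PseudoMetricSpace α]
    [PseudoMetricSpace β] [SecondCountableTopologyEither α β]
    [MeasurableSpace α] [MeasurableSpace β] [OpensMeasurableSpace α] [OpensMeasurableSpace β]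
    {c : α × β → ℝ} (hc : Continuous c) {γ : Measure (α × β)} [IsFiniteMeasure γ]
    (hcγ : Integrable c γ)
    (hopt : ∀ γ' : Measure (α × β), γ'.map Prod.fst = γ.map Prod.fst →
      γ'.map Prod.snd = γ.map Prod.snd → ∫ q, c q ∂γ ≤ ∫ q, c q ∂γ')
    {ι : Type*} [Fintype ι] (p : ι → α × β) (hp : ∀ i, p i ∈ msupport γ) (σ : Equiv.Perm ι) :
    ∑ i, c (p i) ≤ ∑ i, c ((p i).1, (p (σ i)).2) := by
  by_contra! hlt
  set η := (∑ i, c (p i) - ∑ i, c ((p i).1, (p (σ i)).2)) / (2 * Fintype.card ι + 1)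
  have hη : 0 < η := div_pos (sub_pos.2 hlt) (by positivity)
  obtain ⟨δ, hδ, hδη⟩ := hc.exists_pos_forall_ball_dist_lt
    (fun ij : ι × ι => ((p ij.1).1, (p ij.2).2)) hη
  set ρ : ι → Measure (α × β) := fun i => γ[|Metric.ball (p i) δ]
  have hball (i : ι) : γ (Metric.ball (p i) δ) ≠ 0 :=
    (hp i _ Metric.isOpen_ball (Metric.mem_ball_self hδ)).ne'
  have (i : ι) : IsProbabilityMeasure (ρ i) := cond_isProbabilityMeasure (hball i)
  have (i : ι) : IsProbabilityMeasure ((ρ i).map Prod.fst) :=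
    Measure.isProbabilityMeasure_map measurable_fst.aemeasurable
  have (i : ι) : IsProbabilityMeasure ((ρ i).map Prod.snd) :=
    Measure.isProbabilityMeasure_map measurable_snd.aemeasurable
  have hρ (i : ι) : ∀ᵐ q ∂ρ i, q ∈ Metric.ball (p i).1 δ ×ˢ Metric.ball (p i).2 δ := by
    rw [ball_prod_same]
    exact ae_cond_mem measurableSet_ball
  have hclose (i j : ι) {q : α × β} (hq : q ∈ Metric.ball (p i).1 δ ×ˢ Metric.ball (p j).2 δ) :
      |c q - c ((p i).1, (p j).2)| ≤ η := by
    rw [ball_prod_same] at hq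
    exact (hδη (i, j) q hq).le
  obtain ⟨-, hest⟩ := abs_integral_sum_sub_le (ρ := ρ) (r := fun i => c (p i))
    (fun i => hc.aestronglyMeasurable) fun i => (hρ i).mono fun q hq => hclose i i hq
  obtain ⟨hint, hest'⟩ := abs_integral_sum_sub_le
    (ρ := fun i => ((ρ i).map Prod.fst).prod ((ρ (σ i)).map Prod.snd))
    (r := fun i => c ((p i).1, (p (σ i)).2)) (fun i => hc.aestronglyMeasurable)
    fun i => (ae_mem_prod_map_fst_prod_map_snd measurableSet_ball measurableSet_ball (hρ i)
      (hρ (σ i))).mono fun q hq => hclose i (σ i) hq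
  obtain ⟨γ', h₁, h₂, t, ht, hγ'⟩ :=
    exists_map_eq_integral_eq_add_mul_rematch γ hball σ hcγ hint
  have hgap : ∫ q, c q ∂rematch ρ σ - ∫ q, c q ∂(∑ i, ρ i) ≤ -η := by
    have : (2 * Fintype.card ι + 1) * η = ∑ i, c (p i) - ∑ i, c ((p i).1, (p (σ i)).2) :=
      mul_div_cancel₀ _ (by positivity)
    rw [rematch]
    linarith [(abs_le.1 hest).1, (abs_le.1 hest').2]
  have := hopt γ' h₁ h₂
  nlinarith [mul_le_mul_of_nonneg_left hgap ht.le]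

theorem fundamental_theorem_OT_general {n : ℕ}
    (X Y : Set (EuclideanSpace ℝ (Fin n))) (hX : IsCompact X) (hY : IsCompact Y)
    (μ ν : Measure (EuclideanSpace ℝ (Fin n)))
    (hμ : IsProbabilityMeasure μ)
    (hμX : μ X = 1) (hνY : ν Y = 1)
    (γ : Measure (EuclideanSpace ℝ (Fin n) × EuclideanSpace ℝ (Fin n)))
    (hγ₁ : γ.map Prod.fst = μ) (hγ₂ : γ.map Prod.snd = ν) :
    ((∀ γ' : Measure (EuclideanSpace ℝ (Fin n) × EuclideanSpace ℝ (Fin n)),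
        γ'.map Prod.fst = μ → γ'.map Prod.snd = ν →
        ∫ p, -⟪p.1, p.2⟫ ∂γ ≤ ∫ p, -⟪p.1, p.2⟫ ∂γ') ↔
      CyclicallyMonotone (msupport γ)) ∧
    (CyclicallyMonotone (msupport γ) ↔
      ∃ f : EuclideanSpace ℝ (Fin n) → ℝ, ConvexOn ℝ Set.univ f ∧
        msupport γ ⊆ {p | p.2 ∈ SubDiff f p.1}) := by
  obtain ⟨hγ, hγXY⟩ := isProbabilityMeasure_and_ae_mem_prod_of_map hX.measurableSet
    hY.measurableSet hμX hνY hγ₁ hγ₂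
  have hsupp : msupport γ ⊆ X ×ˢ Y := msupport_eq_support γ ▸
    Measure.support_subset_of_isClosed (hX.isClosed.prod hY.isClosed) hγXY
  have hcost : Continuous fun p : EuclideanSpace ℝ (Fin n) × EuclideanSpace ℝ (Fin n) =>
      -⟪p.1, p.2⟫ := (continuous_fst.inner continuous_snd).neg
  refine (fun h₁₂ h₂₃ h₃₁ => ⟨⟨h₁₂, h₃₁ ∘ h₂₃⟩, ⟨h₂₃, h₁₂ ∘ h₃₁⟩⟩) ?_ ?_ ?_
  · exact fun hopt _ p hp σ => sum_le_sum_of_forall_integral_le hcost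
      (hcost.integrable_of_ae_mem_isCompact (hX.prod hY) hγXY) (by rwa [hγ₁, hγ₂]) p hp σ
  · intro hcm
    obtain ⟨R, hR⟩ := isBounded_iff_forall_norm_le.1 hY.isBounded
    exact hcm.exists_convexOn_subset_subDiff fun p hp => hR _ (hsupp hp).2
  · rintro ⟨f, hf, hsub⟩ γ' h₁ h₂
    obtain ⟨hγ', hγ'XY⟩ := isProbabilityMeasure_and_ae_mem_prod_of_map hX.measurableSet
      hY.measurableSet hμX hνY h₁ h₂
    exact integral_neg_inner_le_of_msupport_subset_subDiff hX hY (h₁.trans hγ₁.symm)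
      (h₂.trans hγ₂.symm) hγXY hγ'XY hf hsub

/-- The Fundamental Theorem of Optimal Transport for the cost `c(x,y) = −⟨x,y⟩` on compact
subsets of `ℝ^n`: a transport plan is optimal iff its support is cyclically monotone iff its
support lies in the graph of the subdifferential of a convex function. -/
theorem fundamental_theorem_OT {n : ℕ}
    (X Y : Set (EuclideanSpace ℝ (Fin n))) (hX : IsCompact X) (hY : IsCompact Y)
    (μ ν : Measure (EuclideanSpace ℝ (Fin n)))
    (hμ : IsProbabilityMeasure μ) (hν : IsProbabilityMeasure ν)
    (hμX : μ X = 1) (hνY : ν Y = 1)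
    (γ : Measure (EuclideanSpace ℝ (Fin n) × EuclideanSpace ℝ (Fin n)))
    (hγ₁ : γ.map Prod.fst = μ) (hγ₂ : γ.map Prod.snd = ν) :
    ((∀ γ' : Measure (EuclideanSpace ℝ (Fin n) × EuclideanSpace ℝ (Fin n)),
        γ'.map Prod.fst = μ → γ'.map Prod.snd = ν →
        ∫ p, -⟪p.1, p.2⟫ ∂γ ≤ ∫ p, -⟪p.1, p.2⟫ ∂γ') ↔
      CyclicallyMonotone (msupport γ)) ∧
    (CyclicallyMonotone (msupport γ) ↔
      ∃ f : EuclideanSpace ℝ (Fin n) → ℝ, ConvexOn ℝ Set.univ f ∧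
        msupport γ ⊆ {p | p.2 ∈ SubDiff f p.1}) :=
  fundamental_theorem_OT_general X Y hX hY μ ν hμ hμX hνY γ hγ₁ hγ₂

end
end
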